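/- arXiv:2002.03986 — 9 statements merged into one kernel-verified Lean document; each statement's English description precedes it below -/
import Mathlib

section
/- Let n ≥ 1, let γ : [0,1] → ℝ^{n+1} be smooth and let φ : [a,b] → [0,1] be a smooth map. Then for all t ∈ [a,b], det((γ∘φ)(t), (γ∘φ)'(t), …, (γ∘φ)^{(n)}(t)) = φ'(t)^{n(n+1)/2} · det(γ(φ(t)), γ'(φ(t)), …, γ^{(n)}(φ(t))). -/
open Set Real

/-- Determinant of the (n+1)×(n+1) matrix whose columns are the curve and its first n
derivatives (derivatives taken within the set `s`, i.e. one-sided at endpoints). -/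
noncomputable def curveDet (n : ℕ) (γ : ℝ → Fin (n + 1) → ℝ) (s : Set ℝ) (t : ℝ) : ℝ :=
  Matrix.det (Matrix.of fun (i j : Fin (n + 1)) => iteratedDerivWithin (j : ℕ) γ s t i)

/-- Faà di Bruno coefficients for derivatives within a set. -/
noncomputable def fdbCoeff (φ : ℝ → ℝ) (s : Set ℝ) : ℕ → ℕ → ℝ → ℝ
  | 0, 0 => fun _ => 1
  | 0, _ + 1 => fun _ => 0
  | k + 1, 0 => derivWithin (fdbCoeff φ s k 0) s
  | k + 1, j + 1 => fun t =>
      derivWithin (fdbCoeff φ s k (j + 1)) s t + fdbCoeff φ s k j t * derivWithin φ s t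

lemma fdbCoeff_eq_zero (φ : ℝ → ℝ) (s : Set ℝ) (hs : UniqueDiffOn ℝ s) :
    ∀ k j : ℕ, k < j → ∀ t ∈ s, fdbCoeff φ s k j t = 0 := by
  intro k
  induction k with
  | zero =>
    intro j hj t ht
    match j, hj with
    | j + 1, _ => rfl
  | succ k ih =>
    intro j hj t ht
    match j, hj with
    | j + 1, hj =>
      have hz : ∀ x ∈ s, fdbCoeff φ s k (j + 1) x = 0 := ih (j + 1) (by omega)
      show derivWithin (fdbCoeff φ s k (j + 1)) s t + fdbCoeff φ s k j t * derivWithin φ s t = 0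
      rw [derivWithin_congr (fun x hx => hz x hx) (hz t ht),
        derivWithin_fun_const, Pi.zero_apply, ih j (by omega) t ht]
      ring

lemma fdbCoeff_diag (φ : ℝ → ℝ) (s : Set ℝ) (hs : UniqueDiffOn ℝ s) :
    ∀ k : ℕ, ∀ t ∈ s, fdbCoeff φ s k k t = (derivWithin φ s t) ^ k := by
  intro k
  induction k with
  | zero => intro t ht; simp [fdbCoeff]
  | succ k ih =>
    intro t ht
    have hz : ∀ x ∈ s, fdbCoeff φ s k (k + 1) x = 0 := fdbCoeff_eq_zero φ s hs k (k + 1) (by omega)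
    show derivWithin (fdbCoeff φ s k (k + 1)) s t + fdbCoeff φ s k k t * derivWithin φ s t = _
    rw [derivWithin_congr (fun x hx => hz x hx) (hz t ht),
      derivWithin_fun_const, Pi.zero_apply, ih t ht]
    ring

lemma fdbCoeff_contDiffOn (φ : ℝ → ℝ) (s : Set ℝ) (hφ : ContDiffOn ℝ (⊤ : ℕ∞) φ s)
    (hs : UniqueDiffOn ℝ s) : ∀ k j : ℕ, ContDiffOn ℝ (⊤ : ℕ∞) (fdbCoeff φ s k j) s := by
  intro k
  induction k with
  | zero =>
    intro j
    match j with
    | 0 => exact contDiffOn_const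
    | j + 1 => exact contDiffOn_const
  | succ k ih =>
    intro j
    match j with
    | 0 => exact (ih 0).derivWithin hs (by simp)
    | j + 1 =>
      exact ((ih (j + 1)).derivWithin hs (by simp)).add
        ((ih j).mul (hφ.derivWithin hs (by simp)))

lemma fdb_key {F : Type*} [NormedAddCommGroup F] [NormedSpace ℝ F]
    (a b : ℝ) (hab : a < b) (γ : ℝ → F) (φ : ℝ → ℝ)
    (hγ : ContDiffOn ℝ (⊤ : ℕ∞) γ (Icc 0 1))
    (hφ : ContDiffOn ℝ (⊤ : ℕ∞) φ (Icc a b))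
    (hmaps : Set.MapsTo φ (Icc a b) (Icc 0 1)) (k : ℕ) :
    ∀ t ∈ Icc a b,
      iteratedDerivWithin k (γ ∘ φ) (Icc a b) t
        = ∑ j ∈ Finset.range (k + 1),
            fdbCoeff φ (Icc a b) k j t • iteratedDerivWithin j γ (Icc 0 1) (φ t) := by
  have hsu : UniqueDiffOn ℝ (Icc a b) := uniqueDiffOn_Icc hab
  have hsu' : UniqueDiffOn ℝ (Icc (0:ℝ) 1) := uniqueDiffOn_Icc one_pos
  induction k with
  | zero =>
    intro t ht
    simp [fdbCoeff, iteratedDerivWithin_zero, Function.comp]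
  | succ k ih =>
    intro t ht
    have hut : UniqueDiffWithinAt ℝ (Icc a b) t := hsu t ht
    have hφt : φ t ∈ Icc (0:ℝ) 1 := hmaps ht
    have hg : ∀ j : ℕ, DifferentiableOn ℝ (iteratedDerivWithin j γ (Icc 0 1)) (Icc 0 1) :=
      fun j => hγ.differentiableOn_iteratedDerivWithin (by exact_mod_cast ENat.natCast_lt_top j) hsu'
    have hφd : DifferentiableWithinAt ℝ φ (Icc a b) t :=
      (hφ.differentiableOn (by simp)) t ht
    have hcd : ∀ j : ℕ, DifferentiableWithinAt ℝ (fdbCoeff φ (Icc a b) k j) (Icc a b) t :=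
      fun j => ((fdbCoeff_contDiffOn φ (Icc a b) hφ hsu k j).differentiableOn (by simp)) t ht
    have hcomp : ∀ j : ℕ,
        DifferentiableWithinAt ℝ (fun x => iteratedDerivWithin j γ (Icc 0 1) (φ x)) (Icc a b) t :=
      fun j => (hg j (φ t) hφt).comp t hφd hmaps
    rw [iteratedDerivWithin_succ, derivWithin_congr (fun x hx => ih x hx) (ih t ht),
      derivWithin_fun_sum (A := fun j x => fdbCoeff φ (Icc a b) k j x • iteratedDerivWithin j γ (Icc 0 1) (φ x)) (fun j _ => (hcd j).smul (hcomp j))]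
    have hterm : ∀ j ∈ Finset.range (k + 1),
        derivWithin (fun x => fdbCoeff φ (Icc a b) k j x • iteratedDerivWithin j γ (Icc 0 1) (φ x))
            (Icc a b) t
          = (fdbCoeff φ (Icc a b) k j t * derivWithin φ (Icc a b) t) •
              iteratedDerivWithin (j + 1) γ (Icc 0 1) (φ t)
            + derivWithin (fdbCoeff φ (Icc a b) k j) (Icc a b) t •
                iteratedDerivWithin j γ (Icc 0 1) (φ t) := by
      intro j _
      rw [derivWithin_fun_smul (hcd j) (hcomp j)]
      have hc : derivWithin (fun x => iteratedDerivWithin j γ (Icc 0 1) (φ x)) (Icc a b) t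
          = derivWithin φ (Icc a b) t • iteratedDerivWithin (j + 1) γ (Icc 0 1) (φ t) := by
        rw [iteratedDerivWithin_succ]
        exact derivWithin.scomp t (hg j (φ t) hφt) hφd hmaps
      rw [hc, smul_smul]
    rw [Finset.sum_congr rfl hterm, Finset.sum_add_distrib]
    -- Now rewrite the RHS
    rw [Finset.sum_range_succ' (fun j =>
      fdbCoeff φ (Icc a b) (k + 1) j t • iteratedDerivWithin j γ (Icc 0 1) (φ t)) (k + 1)]
    have hsucc : ∀ j : ℕ, fdbCoeff φ (Icc a b) (k + 1) (j + 1) t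
        = derivWithin (fdbCoeff φ (Icc a b) k (j + 1)) (Icc a b) t
          + fdbCoeff φ (Icc a b) k j t * derivWithin φ (Icc a b) t := fun j => rfl
    have h0 : fdbCoeff φ (Icc a b) (k + 1) 0 t
        = derivWithin (fdbCoeff φ (Icc a b) k 0) (Icc a b) t := rfl
    simp only [hsucc, h0, add_smul]
    rw [Finset.sum_add_distrib]
    have hS2 : ∑ j ∈ Finset.range (k + 1),
        derivWithin (fdbCoeff φ (Icc a b) k j) (Icc a b) t • iteratedDerivWithin j γ (Icc 0 1) (φ t)
        = (∑ j ∈ Finset.range (k + 1),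
            derivWithin (fdbCoeff φ (Icc a b) k (j + 1)) (Icc a b) t •
              iteratedDerivWithin (j + 1) γ (Icc 0 1) (φ t))
          + derivWithin (fdbCoeff φ (Icc a b) k 0) (Icc a b) t •
              iteratedDerivWithin 0 γ (Icc 0 1) (φ t) := by
      have htop : derivWithin (fdbCoeff φ (Icc a b) k (k + 1)) (Icc a b) t = 0 := by
        have hz := fdbCoeff_eq_zero φ (Icc a b) hsu k (k + 1) (by omega)
        rw [derivWithin_congr (fun x hx => hz x hx) (hz t ht)]
        rw [derivWithin_fun_const, Pi.zero_apply]
      rw [show ∑ j ∈ Finset.range (k + 1),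
          derivWithin (fdbCoeff φ (Icc a b) k j) (Icc a b) t •
            iteratedDerivWithin j γ (Icc 0 1) (φ t)
        = ∑ j ∈ Finset.range (k + 2),
          derivWithin (fdbCoeff φ (Icc a b) k j) (Icc a b) t •
            iteratedDerivWithin j γ (Icc 0 1) (φ t) from by
          rw [Finset.sum_range_succ _ (k + 1), htop, zero_smul, add_zero]]
      exact Finset.sum_range_succ' _ (k + 1)
    rw [hS2]
    abel

/-- For a smooth curve `γ : [0,1] → ℝ^{n+1}` and a smooth map
`φ : [a,b] → [0,1]`, one has, for all `t ∈ [a,b]`,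
`det((γ∘φ)(t), …, (γ∘φ)^{(n)}(t)) = φ'(t)^{n(n+1)/2} · det(γ(φ t), …, γ^{(n)}(φ t))`. -/
theorem stmt_1 (n : ℕ) (hn : 1 ≤ n) (a b : ℝ) (hab : a < b)
    (γ : ℝ → Fin (n + 1) → ℝ) (φ : ℝ → ℝ)
    (hγ : ContDiffOn ℝ (⊤ : ℕ∞) γ (Icc 0 1))
    (hφ : ContDiffOn ℝ (⊤ : ℕ∞) φ (Icc a b))
    (hmaps : Set.MapsTo φ (Icc a b) (Icc 0 1)) :
    ∀ t ∈ Icc a b,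
      curveDet n (γ ∘ φ) (Icc a b) t
        = derivWithin φ (Icc a b) t ^ (n * (n + 1) / 2) * curveDet n γ (Icc 0 1) (φ t) := by
  intro t ht
  have hsu : UniqueDiffOn ℝ (Icc a b) := uniqueDiffOn_Icc hab
  set B : Matrix (Fin (n + 1)) (Fin (n + 1)) ℝ :=
    Matrix.of fun i j => iteratedDerivWithin (j : ℕ) γ (Icc 0 1) (φ t) i with hB
  set T : Matrix (Fin (n + 1)) (Fin (n + 1)) ℝ :=
    Matrix.of fun m j => fdbCoeff φ (Icc a b) (j : ℕ) (m : ℕ) t with hT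
  have hA : (Matrix.of fun (i j : Fin (n + 1)) =>
      iteratedDerivWithin (j : ℕ) (γ ∘ φ) (Icc a b) t i) = B * T := by
    ext i j
    rw [Matrix.mul_apply]
    have hkey := fdb_key a b hab γ φ hγ hφ hmaps (j : ℕ) t ht
    have h1 : iteratedDerivWithin (j : ℕ) (γ ∘ φ) (Icc a b) t i
        = ∑ m ∈ Finset.range ((j : ℕ) + 1),
            fdbCoeff φ (Icc a b) (j : ℕ) m t * iteratedDerivWithin m γ (Icc 0 1) (φ t) i := by
      rw [hkey, Finset.sum_apply]
      simp [Pi.smul_apply, smul_eq_mul]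
    show iteratedDerivWithin (j : ℕ) (γ ∘ φ) (Icc a b) t i = _
    rw [h1]
    have h2 : ∑ m : Fin (n + 1), B i m * T m j
        = ∑ m ∈ Finset.range (n + 1),
            iteratedDerivWithin m γ (Icc 0 1) (φ t) i * fdbCoeff φ (Icc a b) (j : ℕ) m t := by
      rw [← Fin.sum_univ_eq_sum_range
        (fun m => iteratedDerivWithin m γ (Icc 0 1) (φ t) i * fdbCoeff φ (Icc a b) (j : ℕ) m t)]
      rfl
    rw [h2]
    rw [Finset.sum_subset (Finset.range_subset_range.2 (by omega : (j : ℕ) + 1 ≤ n + 1))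
      (fun m _ hm => by
        rw [fdbCoeff_eq_zero φ (Icc a b) hsu (j : ℕ) m (by simpa using hm) t ht]
        simp)]
    exact Finset.sum_congr rfl fun m _ => mul_comm _ _
  have hTtri : T.BlockTriangular id := by
    intro i j hij
    show fdbCoeff φ (Icc a b) (j : ℕ) (i : ℕ) t = 0
    exact fdbCoeff_eq_zero φ (Icc a b) hsu (j : ℕ) (i : ℕ) hij t ht
  have hdetT : T.det = derivWithin φ (Icc a b) t ^ (n * (n + 1) / 2) := by
    rw [Matrix.det_of_upperTriangular hTtri]
    have : ∀ m : Fin (n + 1), T m m = derivWithin φ (Icc a b) t ^ (m : ℕ) := by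
      intro m
      show fdbCoeff φ (Icc a b) (m : ℕ) (m : ℕ) t = _
      exact fdbCoeff_diag φ (Icc a b) hsu (m : ℕ) t ht
    rw [Finset.prod_congr rfl (fun m _ => this m), Finset.prod_pow_eq_pow_sum]
    congr 1
    rw [Fin.sum_univ_eq_sum_range (fun m => m) (n + 1), Finset.sum_range_id]
    simp [Nat.add_sub_cancel, Nat.mul_comm]
  unfold curveDet
  rw [hA, Matrix.det_mul, hdetT, mul_comm]
end

section
/- Let n ≥ 1, let γ : [0,1] → S^n be a smooth curve and let g : [0,1] → ℝ be a smooth function with g(t) > 0 for all t ∈ [0,1]. Then γ is locally convex if and only if the curve gγ : t ↦ g(t)γ(t) ∈ ℝ^{n+1} is locally convex. -/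
open Set Real

/-- Leibniz-type structure lemma: the j-th derivative of `g • γ` is a combination of the
derivatives of `γ` up to order `j`, with smooth coefficients, the top coefficient being `g`. -/
lemma smul_iteratedDerivWithin_struct {m : ℕ} (γ : ℝ → Fin m → ℝ) (g : ℝ → ℝ)
    (hγ : ContDiffOn ℝ (⊤ : ℕ∞) γ (Icc 0 1)) (hg : ContDiffOn ℝ (⊤ : ℕ∞) g (Icc 0 1)) (j : ℕ) :
    ∃ d : ℕ → ℝ → ℝ, (∀ k, ContDiffOn ℝ (⊤ : ℕ∞) (d k) (Icc 0 1)) ∧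
      (∀ t ∈ Icc (0:ℝ) 1, d j t = g t) ∧ (∀ k, j < k → ∀ t ∈ Icc (0:ℝ) 1, d k t = 0) ∧
      ∀ t ∈ Icc (0:ℝ) 1, iteratedDerivWithin j (fun u => g u • γ u) (Icc 0 1) t
        = ∑ k ∈ Finset.range (j+1), d k t • iteratedDerivWithin k γ (Icc 0 1) t := by
  set s : Set ℝ := Icc 0 1 with hs_def
  have hs : UniqueDiffOn ℝ s := uniqueDiffOn_Icc_zero_one
  have hderiv0 : ∀ (f : ℝ → ℝ), (∀ u ∈ s, f u = 0) → ∀ t ∈ s, derivWithin f s t = 0 := by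
    intro f hf t ht
    have h0 : derivWithin f s t = derivWithin (fun _ : ℝ => (0:ℝ)) s t := by
      apply derivWithin_congr
      · exact hf
      · exact hf t ht
    rw [h0]
    exact congrFun (derivWithin_const s (0:ℝ)) t
  induction j with
  | zero =>
    refine ⟨fun k => if k = 0 then g else 0, ?_, ?_, ?_, ?_⟩
    · intro k
      by_cases hk : k = 0
      · simpa [hk] using hg
      · simp only [if_neg hk]; exact contDiffOn_const
    · intro t ht; simp
    · intro k hk t ht
      show (if k = 0 then g else 0) t = 0
      rw [if_neg (by omega : ¬ k = 0)]; rfl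
    · intro t ht; simp
  | succ j IH =>
    obtain ⟨d, hd, hdj, hdz, hdf⟩ := IH
    refine ⟨fun k t => derivWithin (d k) s t + (if k = 0 then 0 else d (k-1) t), ?_, ?_, ?_, ?_⟩
    · intro k
      refine ContDiffOn.add ((hd k).derivWithin hs (by simp)) ?_
      by_cases hk : k = 0
      · simp only [if_pos hk]; exact contDiffOn_const
      · simp only [if_neg hk]; exact hd _
    · intro t ht
      have h1 : derivWithin (d (j+1)) s t = 0 :=
        hderiv0 _ (hdz _ (Nat.lt_succ_self _)) t ht
      simp only [if_neg (Nat.succ_ne_zero j), Nat.add_sub_cancel, h1, zero_add]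
      exact hdj t ht
    · intro k hk t ht
      have hk0 : k ≠ 0 := by omega
      have h1 : derivWithin (d k) s t = 0 := hderiv0 _ (hdz _ (by omega)) t ht
      have h2 : d (k-1) t = 0 := hdz _ (by omega) t ht
      simp [h1, h2, hk0]
    · intro t ht
      have hstep : ∀ k : ℕ, HasDerivWithinAt (fun u => d k u • iteratedDerivWithin k γ s u)
          (d k t • iteratedDerivWithin (k+1) γ s t
            + derivWithin (d k) s t • iteratedDerivWithin k γ s t) s t := by
        intro k
        have hdk : HasDerivWithinAt (d k) (derivWithin (d k) s t) s t :=
          (((hd k).differentiableOn (by simp)) t ht).hasDerivWithinAt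
        have hγk : HasDerivWithinAt (iteratedDerivWithin k γ s)
            (iteratedDerivWithin (k+1) γ s t) s t := by
          have hdiff : DifferentiableOn ℝ (iteratedDerivWithin k γ s) s :=
            hγ.differentiableOn_iteratedDerivWithin (m := k)
              (by exact_mod_cast ENat.coe_lt_top k) hs
          have := (hdiff t ht).hasDerivWithinAt
          rw [show iteratedDerivWithin (k+1) γ s t
            = derivWithin (iteratedDerivWithin k γ s) s t from congrFun iteratedDerivWithin_succ t]
          exact this
        exact hdk.smul hγk
      have hsum : HasDerivWithinAt
          (fun u => ∑ k ∈ Finset.range (j+1), d k u • iteratedDerivWithin k γ s u)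
          (∑ k ∈ Finset.range (j+1), (d k t • iteratedDerivWithin (k+1) γ s t
            + derivWithin (d k) s t • iteratedDerivWithin k γ s t)) s t :=
        HasDerivWithinAt.fun_sum (fun k _ => hstep k)
      have hcongr : derivWithin (iteratedDerivWithin j (fun u => g u • γ u) s) s t
          = derivWithin (fun u => ∑ k ∈ Finset.range (j+1),
              d k u • iteratedDerivWithin k γ s u) s t :=
        derivWithin_congr (fun u hu => hdf u hu) (hdf t ht)
      rw [iteratedDerivWithin_succ, hcongr, hsum.derivWithin (hs t ht)]
      set v : ℕ → Fin m → ℝ := fun k => iteratedDerivWithin k γ s t with hv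
      have hR : ∑ k ∈ Finset.range (j+2),
          (derivWithin (d k) s t + if k = 0 then 0 else d (k-1) t) • v k
          = ∑ k ∈ Finset.range (j+2), derivWithin (d k) s t • v k
            + ∑ k ∈ Finset.range (j+2), (if k = 0 then (0:ℝ) else d (k-1) t) • v k := by
        rw [← Finset.sum_add_distrib]
        exact Finset.sum_congr rfl fun k _ => add_smul _ _ _
      have hR1 : ∑ k ∈ Finset.range (j+2), derivWithin (d k) s t • v k
          = ∑ k ∈ Finset.range (j+1), derivWithin (d k) s t • v k := by
        rw [Finset.sum_range_succ]
        rw [hderiv0 _ (hdz _ (Nat.lt_succ_self _)) t ht]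
        simp
      have hR2 : ∑ k ∈ Finset.range (j+2), (if k = 0 then (0:ℝ) else d (k-1) t) • v k
          = ∑ k ∈ Finset.range (j+1), d k t • v (k+1) := by
        rw [Finset.sum_range_succ']
        simp
      rw [hR, hR1, hR2, ← Finset.sum_add_distrib]
      exact Finset.sum_congr rfl fun k _ => add_comm _ _
theorem stmt_2_curveDet_eq (n : ℕ)
    (γ : ℝ → Fin (n + 1) → ℝ) (g : ℝ → ℝ)
    (hγ : ContDiffOn ℝ (⊤ : ℕ∞) γ (Icc 0 1)) (hg : ContDiffOn ℝ (⊤ : ℕ∞) g (Icc 0 1))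
    {t : ℝ} (ht : t ∈ Icc (0:ℝ) 1) :
    curveDet n (fun u => g u • γ u) (Icc 0 1) t = g t ^ (n+1) * curveDet n γ (Icc 0 1) t := by
  set s : Set ℝ := Icc 0 1 with hs_def
  choose d hd hdj hdz hdf using smul_iteratedDerivWithin_struct γ g hγ hg
  set M : Matrix (Fin (n+1)) (Fin (n+1)) ℝ :=
    Matrix.of fun (i j : Fin (n + 1)) => iteratedDerivWithin (j : ℕ) γ s t i with hM
  set B : Matrix (Fin (n+1)) (Fin (n+1)) ℝ := Matrix.of fun (k j : Fin (n+1)) => d j k t with hB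
  have hprod : (Matrix.of fun (i j : Fin (n + 1)) =>
      iteratedDerivWithin (j : ℕ) (fun u => g u • γ u) s t i) = M * B := by
    ext i j
    rw [Matrix.mul_apply]
    have := congrFun (hdf (j : ℕ) t ht) i
    simp only [Finset.sum_apply, Pi.smul_apply, smul_eq_mul] at this
    rw [Matrix.of_apply, this]
    have hsub : ∑ k ∈ Finset.range ((j:ℕ)+1), d (j:ℕ) k t * iteratedDerivWithin k γ s t i
        = ∑ k ∈ Finset.range (n+1), d (j:ℕ) k t * iteratedDerivWithin k γ s t i := by
      refine Finset.sum_subset (Finset.range_subset_range.2 (by omega)) ?_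
      intro k _ hk
      simp only [Finset.mem_range, not_lt] at hk
      rw [hdz (j:ℕ) k (by omega) t ht]
      simp
    rw [hsub, ← Fin.sum_univ_eq_sum_range (fun k => d (j:ℕ) k t * iteratedDerivWithin k γ s t i)]
    exact Finset.sum_congr rfl fun k _ => mul_comm _ _
  have hBtri : B.BlockTriangular id := by
    intro k j hkj
    simp only [id] at hkj
    show d (j:ℕ) (k:ℕ) t = 0
    exact hdz (j:ℕ) (k:ℕ) (by exact_mod_cast hkj) t ht
  have hBdet : B.det = g t ^ (n+1) := by
    rw [Matrix.det_of_upperTriangular hBtri]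
    have hdiag : ∀ k : Fin (n+1), B k k = g t := fun k => hdj (k:ℕ) t ht
    simp only [hdiag, Finset.prod_const, Finset.card_univ, Fintype.card_fin]
  unfold curveDet
  rw [hprod, Matrix.det_mul, hBdet, mul_comm]

/-- If `γ : [0,1] → S^n` is smooth and `g : [0,1] → ℝ` is smooth and
positive, then `γ` is locally convex iff `t ↦ g(t)γ(t)` is locally convex. -/
theorem stmt_2 (n : ℕ) (hn : 1 ≤ n)
    (γ : ℝ → Fin (n + 1) → ℝ) (g : ℝ → ℝ)
    (hγ : ContDiffOn ℝ (⊤ : ℕ∞) γ (Icc 0 1))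
    (hsph : ∀ t ∈ Icc (0 : ℝ) 1, ∑ i, γ t i ^ 2 = 1)
    (hg : ContDiffOn ℝ (⊤ : ℕ∞) g (Icc 0 1))
    (hgpos : ∀ t ∈ Icc (0 : ℝ) 1, 0 < g t) :
    (∀ t ∈ Icc (0 : ℝ) 1, 0 < curveDet n γ (Icc 0 1) t) ↔
      (∀ t ∈ Icc (0 : ℝ) 1, 0 < curveDet n (fun u => g u • γ u) (Icc 0 1) t) := by
  constructor
  · intro h t ht
    rw [stmt_2_curveDet_eq n γ g hγ hg ht]
    exact mul_pos (pow_pos (hgpos t ht) _) (h t ht)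
  · intro h t ht
    have h2 := h t ht
    rw [stmt_2_curveDet_eq n γ g hγ hg ht] at h2
    have hp : 0 < g t ^ (n+1) := pow_pos (hgpos t ht) _
    nlinarith [h2, hp]
end

section
/- Let n ≥ 1, let γ : [0,1] → ℝ^{n+1} be smooth and let g : [0,1] → ℝ be smooth. Then for all t ∈ [0,1], det((gγ)(t), (gγ)'(t), …, (gγ)^{(n)}(t)) = g(t)^{n+1} · det(γ(t), γ'(t), …, γ^{(n)}(t)), where gγ : t ↦ g(t)γ(t). -/
open Set Real

open Finset in
/-- Leibniz rule for iterated derivatives within a set, of a scalar times a vector function. -/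
lemma leibniz_smul {F : Type*} [NormedAddCommGroup F] [NormedSpace ℝ F]
    {s : Set ℝ} (hs : UniqueDiffOn ℝ s) {g : ℝ → ℝ} {γ : ℝ → F}
    (hg : ContDiffOn ℝ (⊤ : ℕ∞) g s) (hγ : ContDiffOn ℝ (⊤ : ℕ∞) γ s) (k : ℕ) :
    ∀ t ∈ s, iteratedDerivWithin k (fun u => g u • γ u) s t =
      ∑ ij ∈ Finset.HasAntidiagonal.antidiagonal k, (k.choose ij.1) •
        (iteratedDerivWithin ij.1 g s t • iteratedDerivWithin ij.2 γ s t) := by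
  have htop : ∀ m : ℕ, (m : WithTop ℕ∞) < ((⊤ : ℕ∞) : WithTop ℕ∞) := fun m => by
    exact_mod_cast ENat.coe_lt_top m
  induction k with
  | zero => intro t ht; simp
  | succ k IH =>
    intro t ht
    have hu := hs t ht
    rw [iteratedDerivWithin_succ]
    rw [derivWithin_congr (fun y hy => IH y hy) (IH t ht)]
    have hterm : ∀ ij ∈ Finset.HasAntidiagonal.antidiagonal k,
        HasDerivWithinAt (fun u => (k.choose ij.1) •
            (iteratedDerivWithin ij.1 g s u • iteratedDerivWithin ij.2 γ s u))
          ((k.choose ij.1) •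
            (iteratedDerivWithin ij.1 g s t • iteratedDerivWithin (ij.2 + 1) γ s t
              + iteratedDerivWithin (ij.1 + 1) g s t • iteratedDerivWithin ij.2 γ s t)) s t := by
      intro ij _
      have hgd : HasDerivWithinAt (iteratedDerivWithin ij.1 g s)
          (iteratedDerivWithin (ij.1 + 1) g s t) s t := by
        have h1 := ((hg.differentiableOn_iteratedDerivWithin (htop ij.1) hs) t
          ht).hasDerivWithinAt
        rwa [← iteratedDerivWithin_succ] at h1
      have hγd : HasDerivWithinAt (iteratedDerivWithin ij.2 γ s)
          (iteratedDerivWithin (ij.2 + 1) γ s t) s t := by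
        have h1 := ((hγ.differentiableOn_iteratedDerivWithin (htop ij.2) hs) t
          ht).hasDerivWithinAt
        rwa [← iteratedDerivWithin_succ] at h1
      exact (hgd.smul hγd).const_smul (k.choose ij.1)
    rw [(HasDerivWithinAt.fun_sum hterm).derivWithin hu]
    have hsplit : ∑ ij ∈ Finset.HasAntidiagonal.antidiagonal k, (k.choose ij.1) •
          (iteratedDerivWithin ij.1 g s t • iteratedDerivWithin (ij.2 + 1) γ s t
            + iteratedDerivWithin (ij.1 + 1) g s t • iteratedDerivWithin ij.2 γ s t)
        = (∑ ij ∈ Finset.HasAntidiagonal.antidiagonal k, (k.choose ij.1) •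
            (iteratedDerivWithin ij.1 g s t • iteratedDerivWithin (ij.2 + 1) γ s t))
          + ∑ ij ∈ Finset.HasAntidiagonal.antidiagonal k, (k.choose ij.2) •
            (iteratedDerivWithin (ij.1 + 1) g s t • iteratedDerivWithin ij.2 γ s t) := by
      rw [← Finset.sum_add_distrib]
      refine Finset.sum_congr rfl fun ij hij => ?_
      rw [smul_add]
      congr 2
      have h1 : ij.1 + ij.2 = k := Finset.HasAntidiagonal.mem_antidiagonal.mp hij
      have h2 : ij.2 = k - ij.1 := by omega
      rw [h2, Nat.choose_symm (by omega)]
    rw [hsplit]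
    exact (Finset.sum_antidiagonal_choose_succ_nsmul
      (fun i j => iteratedDerivWithin i g s t • iteratedDerivWithin j γ s t) k).symm

/-- For smooth `γ : [0,1] → ℝ^{n+1}` and smooth `g : [0,1] → ℝ`, for all
`t ∈ [0,1]`, `det((gγ)(t), …, (gγ)^{(n)}(t)) = g(t)^{n+1} · det(γ(t), …, γ^{(n)}(t))`. -/
theorem stmt_3 (n : ℕ) (hn : 1 ≤ n)
    (γ : ℝ → Fin (n + 1) → ℝ) (g : ℝ → ℝ)
    (hγ : ContDiffOn ℝ (⊤ : ℕ∞) γ (Icc 0 1))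
    (hg : ContDiffOn ℝ (⊤ : ℕ∞) g (Icc 0 1)) :
    ∀ t ∈ Icc (0 : ℝ) 1,
      curveDet n (fun u => g u • γ u) (Icc 0 1) t = g t ^ (n + 1) * curveDet n γ (Icc 0 1) t := by
  intro t ht
  set s : Set ℝ := Icc (0 : ℝ) 1 with hsdef
  have hs : UniqueDiffOn ℝ s := uniqueDiffOn_Icc one_pos
  -- The upper-triangular transition matrix
  set T : Matrix (Fin (n + 1)) (Fin (n + 1)) ℝ :=
    Matrix.of fun j k : Fin (n + 1) =>
      if (j : ℕ) ≤ (k : ℕ) then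
        ((k : ℕ).choose ((k : ℕ) - (j : ℕ)) : ℝ) *
          iteratedDerivWithin ((k : ℕ) - (j : ℕ)) g s t
      else 0 with hT
  have hM : (Matrix.of fun (i j : Fin (n + 1)) =>
        iteratedDerivWithin (j : ℕ) (fun u => g u • γ u) s t i)
      = (Matrix.of fun (i j : Fin (n + 1)) => iteratedDerivWithin (j : ℕ) γ s t i) * T := by
    ext x k
    rw [Matrix.mul_apply]
    have hL := leibniz_smul hs hg hγ (k : ℕ) t ht
    have hLx : iteratedDerivWithin (k : ℕ) (fun u => g u • γ u) s t x
        = ∑ i ∈ Finset.range ((k : ℕ) + 1),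
            ((k : ℕ).choose i : ℝ) * iteratedDerivWithin i g s t *
              iteratedDerivWithin ((k : ℕ) - i) γ s t x := by
      rw [hL, Finset.Nat.sum_antidiagonal_eq_sum_range_succ_mk]
      rw [Finset.sum_apply]
      refine Finset.sum_congr rfl fun i _ => ?_
      simp [Pi.smul_apply, smul_eq_mul, mul_assoc]
    simp only [Matrix.of_apply] at hLx ⊢
    rw [hLx]
    -- rewrite RHS as a sum over range (n+1) of a function of ℕ
    have hR : ∑ j : Fin (n + 1), iteratedDerivWithin (j : ℕ) γ s t x * T j k
        = ∑ m ∈ Finset.range (n + 1), (fun m : ℕ => iteratedDerivWithin m γ s t x *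
            (if m ≤ (k : ℕ) then
              ((k : ℕ).choose ((k : ℕ) - m) : ℝ) * iteratedDerivWithin ((k : ℕ) - m) g s t
            else 0)) m := by
      rw [← Fin.sum_univ_eq_sum_range]
      exact Finset.sum_congr rfl fun j _ => rfl
    rw [hR]
    rw [← Finset.sum_subset (Finset.range_subset_range.mpr (by omega : (k : ℕ) + 1 ≤ n + 1))
      (fun m _ hm => by
        have hmk : ¬ m ≤ (k : ℕ) := fun h => hm (Finset.mem_range.mpr (Nat.lt_succ_of_le h))
        simp [hmk])]
    rw [← Finset.sum_range_reflect]
    refine Finset.sum_congr rfl fun i hi => ?_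
    have hik : i ≤ (k : ℕ) := by
      have := Finset.mem_range.mp hi; omega
    have h1 : (k : ℕ) - ((k : ℕ) - i) = i := by omega
    have h2 : (k : ℕ) - i ≤ (k : ℕ) := by omega
    simp only [Nat.add_sub_cancel, h1, if_pos h2, if_pos hik]
    ring
  have hTtri : T.BlockTriangular id := by
    intro i j hij
    have hji : (j : ℕ) < (i : ℕ) := hij
    have hnle : ¬ (i : ℕ) ≤ (j : ℕ) := not_le.mpr hji
    rw [hT]
    exact if_neg hnle
  have hdetT : T.det = g t ^ (n + 1) := by
    rw [Matrix.det_of_upperTriangular hTtri]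
    have hdiag : ∀ k : Fin (n + 1), T k k = g t := by
      intro k
      rw [hT]
      show (if (k : ℕ) ≤ (k : ℕ) then ((k : ℕ).choose ((k : ℕ) - (k : ℕ)) : ℝ) *
          iteratedDerivWithin ((k : ℕ) - (k : ℕ)) g s t else 0) = g t
      rw [if_pos le_rfl, Nat.sub_self, Nat.choose_zero_right]
      simp
    rw [Finset.prod_congr rfl fun k _ => hdiag k, Finset.prod_const, Finset.card_univ,
      Fintype.card_fin]
  rw [curveDet, curveDet, hM, Matrix.det_mul, hdetT, mul_comm]
end

section
/- Let n ≥ 1 and let γ : [0,1] → ℝ^{n+1} be a smooth curve with γ(t) ≠ 0 for all t ∈ [0,1]. Then γ is locally convex if and only if the curve t ↦ γ(t)/‖γ(t)‖ ∈ S^n is locally convex. -/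
open Set Real

/-- The Euclidean norm of a vector in `ℝ^k`. -/
noncomputable def vnorm {k : ℕ} (v : Fin k → ℝ) : ℝ := Real.sqrt (∑ i, v i ^ 2)

open Finset in
lemma smul_rep {m : ℕ} (f : ℝ → ℝ) (γ : ℝ → Fin m → ℝ) (s : Set ℝ)
    (hs : UniqueDiffOn ℝ s) (hf : ContDiffOn ℝ (⊤ : ℕ∞) f s) (hγ : ContDiffOn ℝ (⊤ : ℕ∞) γ s) (k : ℕ) :
    ∃ c : ℕ → ℝ → ℝ, (∀ l, ContDiffOn ℝ (⊤ : ℕ∞) (c l) s) ∧ (∀ l, k < l → ∀ u, c l u = 0) ∧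
      (∀ u ∈ s, c k u = f u) ∧
      (∀ u ∈ s, iteratedDerivWithin k (fun v => f v • γ v) s u
        = ∑ l ∈ Finset.range (k + 1), c l u • iteratedDerivWithin l γ s u) := by
  induction k with
  | zero =>
    refine ⟨fun l => if l = 0 then f else 0, ?_, ?_, ?_, ?_⟩
    · intro l
      by_cases h : l = 0
      · simpa [h] using hf
      · simp only [h, if_false]; exact contDiffOn_const
    · intro l hl u
      have h : l ≠ 0 := by omega
      simp [h]
    · intro u hu; simp
    · intro u hu; simp [iteratedDerivWithin_zero]
  | succ k ih =>
    obtain ⟨c, hc, hc0, hck, hrep⟩ := ih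
    refine ⟨fun l u => (if l ≤ k then derivWithin (c l) s u else 0)
        + (if l = 0 then 0 else c (l - 1) u), ?_, ?_, ?_, ?_⟩
    · intro l
      dsimp only
      split_ifs with h1 h2 h2 <;>
        first
          | exact ((hc l).derivWithin hs (by simp)).add contDiffOn_const
          | exact ((hc l).derivWithin hs (by simp)).add ((hc (l-1)).of_le (by simp))
          | exact contDiffOn_const.add ((hc (l-1)).of_le (by simp))
          | exact contDiffOn_const.add contDiffOn_const
    · intro l hl u
      have h1 : ¬ l ≤ k := by omega
      have h2 : l ≠ 0 := by omega
      simp [h1, h2, hc0 (l - 1) (by omega) u]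
    · intro u hu
      have h1 : ¬ k + 1 ≤ k := by omega
      simp [h1, hck u hu]
    · intro u hu
      have hdiff : ∀ l : ℕ, DifferentiableOn ℝ (iteratedDerivWithin l γ s) s := fun l =>
        hγ.differentiableOn_iteratedDerivWithin (by exact_mod_cast ENat.coe_lt_top l) hs
      have key : HasDerivWithinAt (fun v => ∑ l ∈ Finset.range (k + 1),
            c l v • iteratedDerivWithin l γ s v)
          (∑ l ∈ Finset.range (k + 1),
            (c l u • iteratedDerivWithin (l + 1) γ s u
              + derivWithin (c l) s u • iteratedDerivWithin l γ s u)) s u := by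
        refine HasDerivWithinAt.fun_sum fun l _ => ?_
        have h1 : HasDerivWithinAt (c l) (derivWithin (c l) s u) s u :=
          (((hc l).differentiableOn (by simp)) u hu).hasDerivWithinAt
        have h2 : HasDerivWithinAt (iteratedDerivWithin l γ s)
            (iteratedDerivWithin (l + 1) γ s u) s u := by
          have h3 := ((hdiff l) u hu).hasDerivWithinAt
          rwa [← iteratedDerivWithin_succ] at h3
        exact h1.smul h2
      have hstep : iteratedDerivWithin (k + 1) (fun v => f v • γ v) s u
          = ∑ l ∈ Finset.range (k + 1),
            (c l u • iteratedDerivWithin (l + 1) γ s u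
              + derivWithin (c l) s u • iteratedDerivWithin l γ s u) := by
        rw [iteratedDerivWithin_succ,
          derivWithin_congr (fun v hv => hrep v hv) (hrep u hu)]
        exact key.derivWithin (hs u hu)
      have e1 : ∑ l ∈ Finset.range (k + 2),
          ((if l ≤ k then derivWithin (c l) s u else 0)
            + (if l = 0 then 0 else c (l - 1) u)) • iteratedDerivWithin l γ s u
          = ∑ l ∈ Finset.range (k + 2),
            ((if l ≤ k then derivWithin (c l) s u else 0) • iteratedDerivWithin l γ s u)
          + ∑ l ∈ Finset.range (k + 2),
            ((if l = 0 then 0 else c (l - 1) u) • iteratedDerivWithin l γ s u) := by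
        rw [← Finset.sum_add_distrib]
        exact Finset.sum_congr rfl fun l _ => add_smul _ _ _
      have eA : ∑ l ∈ Finset.range (k + 2),
            ((if l ≤ k then derivWithin (c l) s u else 0) • iteratedDerivWithin l γ s u)
          = ∑ l ∈ Finset.range (k + 1),
            derivWithin (c l) s u • iteratedDerivWithin l γ s u := by
        rw [Finset.sum_range_succ]
        have h1 : ¬ k + 1 ≤ k := by omega
        rw [if_neg h1, zero_smul, add_zero]
        exact Finset.sum_congr rfl fun l hl =>
          by rw [if_pos (Nat.lt_succ_iff.mp (Finset.mem_range.mp hl))]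
      have eB : ∑ l ∈ Finset.range (k + 2),
            ((if l = 0 then 0 else c (l - 1) u) • iteratedDerivWithin l γ s u)
          = ∑ l ∈ Finset.range (k + 1),
            c l u • iteratedDerivWithin (l + 1) γ s u := by
        rw [Finset.sum_range_succ']
        simp
      rw [hstep, e1, eA, eB, Finset.sum_add_distrib, add_comm]

lemma curveDet_smul (n : ℕ) (f : ℝ → ℝ) (γ : ℝ → Fin (n + 1) → ℝ) (s : Set ℝ)
    (hs : UniqueDiffOn ℝ s) (hf : ContDiffOn ℝ (⊤ : ℕ∞) f s) (hγ : ContDiffOn ℝ (⊤ : ℕ∞) γ s)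
    (t : ℝ) (ht : t ∈ s) :
    curveDet n (fun u => f u • γ u) s t = f t ^ (n + 1) * curveDet n γ s t := by
  choose c hc hc0 hck hrep using fun k => smul_rep f γ s hs hf hγ k
  set M : Matrix (Fin (n + 1)) (Fin (n + 1)) ℝ :=
    Matrix.of fun i j => iteratedDerivWithin (j : ℕ) γ s t i with hM
  set U : Matrix (Fin (n + 1)) (Fin (n + 1)) ℝ :=
    Matrix.of fun l j => c (j : ℕ) (l : ℕ) t with hU
  have hMU : (Matrix.of fun (i j : Fin (n + 1)) =>
      iteratedDerivWithin (j : ℕ) (fun u => f u • γ u) s t i) = M * U := by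
    ext i j
    rw [Matrix.mul_apply]
    have h1 : iteratedDerivWithin (j : ℕ) (fun u => f u • γ u) s t
        = ∑ l ∈ Finset.range ((j : ℕ) + 1), c (j : ℕ) l t • iteratedDerivWithin l γ s t :=
      hrep (j : ℕ) t ht
    have h2 : (Matrix.of fun (i j : Fin (n + 1)) =>
        iteratedDerivWithin (j : ℕ) (fun u => f u • γ u) s t i) i j
        = ∑ l ∈ Finset.range ((j : ℕ) + 1), c (j : ℕ) l t * iteratedDerivWithin l γ s t i := by
      simp only [Matrix.of_apply, h1, Finset.sum_apply, Pi.smul_apply, smul_eq_mul]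
    rw [h2]
    have h3 : ∑ l : Fin (n + 1), M i l * U l j
        = ∑ l ∈ Finset.range (n + 1), iteratedDerivWithin l γ s t i * c (j : ℕ) l t := by
      rw [← Fin.sum_univ_eq_sum_range (fun l => iteratedDerivWithin l γ s t i * c (j : ℕ) l t)]
      rfl
    rw [h3]
    rw [← Finset.sum_subset (Finset.range_subset_range.mpr (Nat.succ_le_succ j.is_le))
      (fun l _ hl => ?_)]
    · exact Finset.sum_congr rfl fun l _ => mul_comm _ _
    · rw [hc0 (j : ℕ) l (by simpa using Finset.mem_range.not.mp hl |> fun h => by omega) t,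
        mul_zero]
  have hUtri : U.BlockTriangular id := by
    intro l j hlj
    exact hc0 (j : ℕ) (l : ℕ) hlj t
  have hUdiag : ∀ j : Fin (n + 1), U j j = f t := fun j => hck (j : ℕ) t ht
  have hdetU : U.det = f t ^ (n + 1) := by
    rw [Matrix.det_of_upperTriangular hUtri]
    simp [hUdiag]
  unfold curveDet
  rw [hMU, Matrix.det_mul, hdetU, mul_comm]

/-- If `γ : [0,1] → ℝ^{n+1}` is smooth and nonvanishing, then `γ` is
locally convex iff the normalized curve `t ↦ γ(t)/‖γ(t)‖ ∈ S^n` is locally convex. -/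
theorem stmt_4 (n : ℕ) (hn : 1 ≤ n)
    (γ : ℝ → Fin (n + 1) → ℝ)
    (hγ : ContDiffOn ℝ (⊤ : ℕ∞) γ (Icc 0 1))
    (hne : ∀ t ∈ Icc (0 : ℝ) 1, γ t ≠ 0) :
    (∀ t ∈ Icc (0 : ℝ) 1, 0 < curveDet n γ (Icc 0 1) t) ↔
      (∀ t ∈ Icc (0 : ℝ) 1, 0 < curveDet n (fun u => (vnorm (γ u))⁻¹ • γ u) (Icc 0 1) t) := by
  have hs : UniqueDiffOn ℝ (Icc (0 : ℝ) 1) := uniqueDiffOn_Icc zero_lt_one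
  set f : ℝ → ℝ := fun u => (vnorm (γ u))⁻¹ with hfdef
  have hqpos : ∀ u ∈ Icc (0 : ℝ) 1, 0 < ∑ i, γ u i ^ 2 := by
    intro u hu
    obtain ⟨i, hi⟩ : ∃ i, γ u i ≠ 0 := Function.ne_iff.mp (hne u hu)
    exact Finset.sum_pos' (fun j _ => sq_nonneg _)
      ⟨i, Finset.mem_univ i, by positivity⟩
  have hq : ContDiffOn ℝ (⊤ : ℕ∞) (fun u => ∑ i, γ u i ^ 2) (Icc (0 : ℝ) 1) := by
    refine ContDiffOn.sum fun i _ => ?_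
    exact (((ContinuousLinearMap.proj i : (Fin (n + 1) → ℝ) →L[ℝ] ℝ).contDiff).comp_contDiffOn
      hγ).pow 2
  have hf : ContDiffOn ℝ (⊤ : ℕ∞) f (Icc (0 : ℝ) 1) := by
    refine ContDiffOn.inv ?_ fun u hu => ?_
    · exact hq.sqrt fun u hu => (hqpos u hu).ne'
    · exact (Real.sqrt_pos.mpr (hqpos u hu)).ne'
  have hfpos : ∀ u ∈ Icc (0 : ℝ) 1, 0 < f u := fun u hu =>
    inv_pos.mpr (Real.sqrt_pos.mpr (hqpos u hu))
  have key : ∀ t ∈ Icc (0 : ℝ) 1,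
      curveDet n (fun u => (vnorm (γ u))⁻¹ • γ u) (Icc 0 1) t
        = f t ^ (n + 1) * curveDet n γ (Icc 0 1) t := fun t ht =>
    curveDet_smul n f γ (Icc 0 1) hs hf hγ t ht
  constructor
  · intro h t ht
    rw [key t ht]
    exact mul_pos (pow_pos (hfpos t ht) _) (h t ht)
  · intro h t ht
    have h1 := h t ht
    rw [key t ht] at h1
    have hp : (0 : ℝ) < f t ^ (n + 1) := pow_pos (hfpos t ht) _
    nlinarith [h1, hp]
end

section
/- Let n ≥ 1 and let γ = (γ_1, …, γ_{n+1}) : [0,1] → ℝ^{n+1} be a smooth curve with γ_1(t) > 0 for all t ∈ [0,1]. Then γ is locally convex if and only if the curve t ↦ (1, γ_2(t)/γ_1(t), …, γ_{n+1}(t)/γ_1(t)) ∈ ℝ^{n+1} is locally convex. -/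
open Set Real

/-- Pascal-style reindexing for the inductive step of the Leibniz rule. -/
lemma pascal_sum (A B : ℕ → ℝ) (k : ℕ) :
    ∑ l ∈ Finset.range (k + 1),
        (k.choose l : ℝ) * (A (l + 1) * B (k - l) + A l * B (k + 1 - l))
      = ∑ l ∈ Finset.range (k + 2), ((k + 1).choose l : ℝ) * (A l * B (k + 1 - l)) := by
  have h1 : ∑ l ∈ Finset.range (k + 2), ((k + 1).choose l : ℝ) * (A l * B (k + 1 - l))
      = (∑ l ∈ Finset.range (k + 1),
          ((k + 1).choose (l + 1) : ℝ) * (A (l + 1) * B (k - l))) + A 0 * B (k + 1) := by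
    rw [Finset.sum_range_succ']
    simp [Nat.succ_sub_succ]
  have h2 : ∑ l ∈ Finset.range (k + 1), (k.choose l : ℝ) * (A l * B (k + 1 - l))
      = (∑ l ∈ Finset.range k, (k.choose (l + 1) : ℝ) * (A (l + 1) * B (k - l)))
        + A 0 * B (k + 1) := by
    rw [Finset.sum_range_succ']
    simp [Nat.succ_sub_succ]
  have h3 : ∑ l ∈ Finset.range (k + 1), (k.choose (l + 1) : ℝ) * (A (l + 1) * B (k - l))
      = ∑ l ∈ Finset.range k, (k.choose (l + 1) : ℝ) * (A (l + 1) * B (k - l)) := by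
    rw [Finset.sum_range_succ]
    simp [Nat.choose_succ_self]
  simp only [mul_add, Finset.sum_add_distrib] at *
  rw [h1, h2]
  have h4 : ∀ l ∈ Finset.range (k + 1),
      ((k + 1).choose (l + 1) : ℝ) * (A (l + 1) * B (k - l))
        = (k.choose l : ℝ) * (A (l + 1) * B (k - l))
          + (k.choose (l + 1) : ℝ) * (A (l + 1) * B (k - l)) := by
    intro l _
    rw [Nat.choose_succ_succ']
    push_cast
    ring
  rw [Finset.sum_congr rfl h4, Finset.sum_add_distrib, h3]
  ring

/-- Leibniz rule for iterated derivatives within a set. -/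
lemma leibniz_iteratedDerivWithin {s : Set ℝ} (hs : UniqueDiffOn ℝ s)
    {f g : ℝ → ℝ} (hf : ContDiffOn ℝ (⊤ : ℕ∞) f s) (hg : ContDiffOn ℝ (⊤ : ℕ∞) g s) (k : ℕ) :
    ∀ x ∈ s, iteratedDerivWithin k (fun y => f y * g y) s x
      = ∑ l ∈ Finset.range (k + 1),
          (k.choose l : ℝ) * (iteratedDerivWithin l f s x
            * iteratedDerivWithin (k - l) g s x) := by
  induction k with
  | zero => intro x hx; simp
  | succ k ih =>
    intro x hx
    have hdf : ∀ (m : ℕ), DifferentiableWithinAt ℝ (iteratedDerivWithin m f s) s x :=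
      fun m => hf.differentiableOn_iteratedDerivWithin (by exact_mod_cast WithTop.coe_lt_top _)
        hs x hx
    have hdg : ∀ (m : ℕ), DifferentiableWithinAt ℝ (iteratedDerivWithin m g s) s x :=
      fun m => hg.differentiableOn_iteratedDerivWithin (by exact_mod_cast WithTop.coe_lt_top _)
        hs x hx
    rw [iteratedDerivWithin_succ,
      derivWithin_congr (fun y hy => ih y hy) (ih x hx)]
    rw [derivWithin_fun_sum (fun l _ => by
      exact (((hdf l).mul (hdg (k - l))).const_mul _))]
    have hterm : ∀ l ∈ Finset.range (k + 1),
        derivWithin (fun y => (k.choose l : ℝ) * (iteratedDerivWithin l f s y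
            * iteratedDerivWithin (k - l) g s y)) s x
          = (k.choose l : ℝ) * (iteratedDerivWithin (l + 1) f s x
              * iteratedDerivWithin (k - l) g s x
            + iteratedDerivWithin l f s x * iteratedDerivWithin (k + 1 - l) g s x) := by
      intro l hl
      rw [derivWithin_const_mul _ ((hdf l).fun_mul (hdg (k - l))),
        derivWithin_fun_mul (hdf l) (hdg (k - l))]
      rw [← iteratedDerivWithin_succ, ← iteratedDerivWithin_succ]
      have : k - l + 1 = k + 1 - l := by
        have : l ≤ k := Nat.lt_succ_iff.1 (Finset.mem_range.1 hl)
        omega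
      rw [this]
    rw [Finset.sum_congr rfl hterm]
    exact pascal_sum (fun m => iteratedDerivWithin m f s x) (fun m => iteratedDerivWithin m g s x) k

/-- Iterated derivatives of a pi-valued function are computed componentwise. -/
lemma iteratedDerivWithin_pi {m : ℕ} {s : Set ℝ} (hs : UniqueDiffOn ℝ s)
    {γ : ℝ → Fin m → ℝ} (hγ : ContDiffOn ℝ (⊤ : ℕ∞) γ s) (k : ℕ) (i : Fin m) :
    ∀ x ∈ s, iteratedDerivWithin k γ s x i
      = iteratedDerivWithin k (fun u => γ u i) s x := by
  induction k with
  | zero => intro x hx; simp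
  | succ k ih =>
    intro x hx
    have hd : DifferentiableWithinAt ℝ (iteratedDerivWithin k γ s) s x :=
      hγ.differentiableOn_iteratedDerivWithin (by exact_mod_cast WithTop.coe_lt_top _) hs x hx
    have hdc : ∀ j : Fin m,
        DifferentiableWithinAt ℝ (fun u => iteratedDerivWithin k γ s u j) s x :=
      fun j => by
        have := hd.hasDerivWithinAt
        exact (hasDerivWithinAt_pi.1 this j).differentiableWithinAt
    rw [iteratedDerivWithin_succ, iteratedDerivWithin_succ]
    rw [derivWithin_pi hdc]
    exact derivWithin_congr (fun y hy => ih y hy) (ih x hx)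

/-- If `γ = (γ_1, …, γ_{n+1}) : [0,1] → ℝ^{n+1}` is smooth with
`γ_1(t) > 0` for all `t`, then `γ` is locally convex iff the curve
`t ↦ (1, γ_2(t)/γ_1(t), …, γ_{n+1}(t)/γ_1(t))` is locally convex. -/
theorem stmt_5 (n : ℕ) (hn : 1 ≤ n)
    (γ : ℝ → Fin (n + 1) → ℝ)
    (hγ : ContDiffOn ℝ (⊤ : ℕ∞) γ (Icc 0 1))
    (hpos : ∀ t ∈ Icc (0 : ℝ) 1, 0 < γ t 0) :
    (∀ t ∈ Icc (0 : ℝ) 1, 0 < curveDet n γ (Icc 0 1) t) ↔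
      (∀ t ∈ Icc (0 : ℝ) 1,
        0 < curveDet n (fun u i => if i = 0 then 1 else γ u i / γ u 0) (Icc 0 1) t) := by
  set s : Set ℝ := Icc (0 : ℝ) 1 with hs_def
  have hs : UniqueDiffOn ℝ s := uniqueDiffOn_Icc zero_lt_one
  have hγi : ∀ i, ContDiffOn ℝ (⊤ : ℕ∞) (fun u => γ u i) s := fun i => contDiffOn_pi.1 hγ i
  have hne : ∀ u ∈ s, γ u 0 ≠ 0 := fun u hu => (hpos u hu).ne'
  set ginv : ℝ → ℝ := fun u => (γ u 0)⁻¹ with hginv_def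
  have hginv : ContDiffOn ℝ (⊤ : ℕ∞) ginv s := (hγi 0).inv hne
  set η : ℝ → Fin (n + 1) → ℝ := fun u i => if i = 0 then 1 else γ u i / γ u 0 with hη_def
  have hη : ContDiffOn ℝ (⊤ : ℕ∞) η s := by
    apply contDiffOn_pi.2
    intro i
    by_cases hi : i = 0
    · simp only [hη_def, hi, if_pos rfl]; exact contDiffOn_const
    · simp only [hη_def, if_neg hi]; exact (hγi i).div (hγi 0) hne
  -- The key identity
  have key : ∀ t ∈ s, curveDet n η s t = ginv t ^ (n + 1) * curveDet n γ s t := by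
    intro t ht
    set M : Matrix (Fin (n + 1)) (Fin (n + 1)) ℝ :=
      Matrix.of fun i j => iteratedDerivWithin (j : ℕ) (fun u => γ u i) s t with hM_def
    set T : Matrix (Fin (n + 1)) (Fin (n + 1)) ℝ :=
      Matrix.of fun l j => if (l : ℕ) ≤ (j : ℕ) then
          ((j : ℕ).choose l : ℝ) * iteratedDerivWithin ((j : ℕ) - l) ginv s t
        else 0 with hT_def
    have hMdet : curveDet n γ s t = M.det := by
      unfold curveDet
      congr 1
      ext i j
      exact iteratedDerivWithin_pi hs hγ j i t ht
    have hMT : curveDet n η s t = (M * T).det := by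
      unfold curveDet
      congr 1
      ext i j
      show iteratedDerivWithin (j : ℕ) η s t i = (M * T) i j
      rw [iteratedDerivWithin_pi hs hη j i t ht]
      have heq : Set.EqOn (fun u => η u i) (fun u => γ u i * ginv u) s := by
        intro u hu
        by_cases hi : i = 0
        · simp only [hη_def, hi, if_pos rfl, hginv_def]
          exact (mul_inv_cancel₀ (hne u hu)).symm
        · simp only [hη_def, if_neg hi, hginv_def, div_eq_mul_inv]
      rw [iteratedDerivWithin_congr heq ht,
        leibniz_iteratedDerivWithin hs (hγi i) hginv (j : ℕ) t ht]
      rw [Matrix.mul_apply]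
      have hrw : ∀ x : Fin (n + 1), M i x * T x j
          = if (x : ℕ) ≤ (j : ℕ) then
              ((j : ℕ).choose x : ℝ) * (iteratedDerivWithin (x : ℕ) (fun u => γ u i) s t
                * iteratedDerivWithin ((j : ℕ) - x) ginv s t)
            else 0 := by
        intro x
        simp only [hM_def, hT_def, Matrix.of_apply, mul_ite, mul_zero]
        split_ifs
        · ring
        · rfl
      rw [Finset.sum_congr rfl (fun x _ => hrw x)]
      have hsum : ∑ x : Fin (n + 1), (if (x : ℕ) ≤ (j : ℕ) then
            ((j : ℕ).choose x : ℝ) * (iteratedDerivWithin (x : ℕ) (fun u => γ u i) s t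
              * iteratedDerivWithin ((j : ℕ) - x) ginv s t)
          else 0)
          = ∑ l ∈ Finset.range (n + 1), (if l ≤ (j : ℕ) then
              ((j : ℕ).choose l : ℝ) * (iteratedDerivWithin l (fun u => γ u i) s t
                * iteratedDerivWithin ((j : ℕ) - l) ginv s t)
            else 0) :=
        Fin.sum_univ_eq_sum_range (fun l => if l ≤ (j : ℕ) then
            ((j : ℕ).choose l : ℝ) * (iteratedDerivWithin l (fun u => γ u i) s t
              * iteratedDerivWithin ((j : ℕ) - l) ginv s t)
          else 0) (n + 1)
      rw [hsum]
      rw [show ∑ l ∈ Finset.range (n + 1), (if l ≤ (j : ℕ) then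
              ((j : ℕ).choose l : ℝ) * (iteratedDerivWithin l (fun u => γ u i) s t
                * iteratedDerivWithin ((j : ℕ) - l) ginv s t)
            else 0)
          = ∑ l ∈ Finset.range ((j : ℕ) + 1), (if l ≤ (j : ℕ) then
              ((j : ℕ).choose l : ℝ) * (iteratedDerivWithin l (fun u => γ u i) s t
                * iteratedDerivWithin ((j : ℕ) - l) ginv s t)
            else 0) from
        (Finset.sum_subset (Finset.range_subset_range.2 (by omega))
          (fun x _ hx' => by
            rw [if_neg]
            simp only [Finset.mem_range, not_lt] at hx'
            omega)).symm]
      refine (Finset.sum_congr rfl ?_).symm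
      intro l hl
      rw [if_pos (Nat.lt_succ_iff.1 (Finset.mem_range.1 hl))]
    have hTtri : T.BlockTriangular id := by
      intro i j hij
      simp only [id_eq] at hij
      simp only [hT_def, Matrix.of_apply]
      rw [if_neg]
      exact not_le.2 hij
    have hTdet : T.det = ginv t ^ (n + 1) := by
      rw [Matrix.det_of_upperTriangular hTtri]
      have : ∀ i : Fin (n + 1), T i i = ginv t := by
        intro i
        simp only [hT_def, Matrix.of_apply, le_refl, if_pos, Nat.choose_self, Nat.sub_self,
          iteratedDerivWithin_zero, Nat.cast_one, one_mul]
      rw [Finset.prod_congr rfl (fun i _ => this i)]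
      simp
    rw [hMT, Matrix.det_mul, hTdet, hMdet]
    ring
  constructor
  · intro h t ht
    rw [key t ht]
    exact mul_pos (pow_pos (inv_pos.2 (hpos t ht)) _) (h t ht)
  · intro h t ht
    have h1 := h t ht
    rw [key t ht] at h1
    have h2 : 0 < ginv t ^ (n + 1) := pow_pos (inv_pos.2 (hpos t ht)) _
    by_contra hle
    push_neg at hle
    nlinarith
end

section
/- Let n ≥ 1 and let Γ : [0,1] → ℝ^{(n+1)×(n+1)} be a smooth matrix-valued curve with Γ(t) ∈ SO(n+1) for all t (i.e., Γ(t)ᵀΓ(t) = I and det Γ(t) = 1) and Γ(0) = I. Then the following are equivalent: (a) for every t ∈ [0,1], the matrix Λ(t) = Γ(t)⁻¹Γ'(t) is skew-symmetric, satisfies Λ_{i+1,i}(t) > 0 for all 1 ≤ i ≤ n, and Λ_{i,j}(t) = 0 whenever |i − j| ≥ 2; (b) there exist a smooth locally convex curve γ : [0,1] → S^n and a smooth map R : [0,1] → ℝ^{(n+1)×(n+1)} with each R(t) upper triangular with positive diagonal entries, such that for all t the matrix with columns γ(t), γ'(t), …, γ^{(n)}(t) equals Γ(t)R(t). -/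
open Set Real

/-- The logarithmic derivative `Λ(t) = Γ(t)⁻¹ Γ'(t)` of a matrix-valued curve
(derivative taken within `[0,1]`). -/
noncomputable def logDerivMat (n : ℕ) (Γ : ℝ → Fin (n + 1) → Fin (n + 1) → ℝ) (t : ℝ) :
    Matrix (Fin (n + 1)) (Fin (n + 1)) ℝ :=
  (Matrix.of (Γ t))⁻¹ * Matrix.of (derivWithin Γ (Set.Icc 0 1) t)

open Set Real

section stmt9aux

open Matrix

variable {n : ℕ}

private lemma s9_hu : UniqueDiffOn ℝ (Icc (0:ℝ) 1) := uniqueDiffOn_Icc one_pos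

private lemma s9_iter_smooth {F} [NormedAddCommGroup F] [NormedSpace ℝ F] {γ : ℝ → F}
    (hγ : ContDiffOn ℝ (⊤ : ℕ∞) γ (Icc 0 1)) (j : ℕ) :
    ContDiffOn ℝ (⊤ : ℕ∞) (iteratedDerivWithin j γ (Icc 0 1)) (Icc 0 1) := by
  induction j with
  | zero => simpa [iteratedDerivWithin_zero] using hγ
  | succ j ih =>
    exact (ih.derivWithin s9_hu (by simp)).congr
      (fun t ht => congrFun iteratedDerivWithin_succ t)

/-- `W j t = Γ(t)ᵀ · γ^{(j)}(t)`, the coordinates of the j-th derivative in the moving frame. -/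
noncomputable def s9W (n : ℕ) (Γ : ℝ → Fin (n+1) → Fin (n+1) → ℝ)
    (γ : ℝ → Fin (n+1) → ℝ) (j : ℕ) (t : ℝ) : Fin (n+1) → ℝ :=
  (Matrix.of (Γ t))ᵀ *ᵥ iteratedDerivWithin j γ (Icc 0 1) t

private lemma s9W_apply (Γ : ℝ → Fin (n+1) → Fin (n+1) → ℝ) (γ : ℝ → Fin (n+1) → ℝ)
    (j : ℕ) (t : ℝ) (i : Fin (n+1)) :
    s9W n Γ γ j t i = ∑ k, Γ t k i * iteratedDerivWithin j γ (Icc 0 1) t k := by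
  simp [s9W, Matrix.mulVec, dotProduct]

private lemma s9W_smooth {Γ : ℝ → Fin (n+1) → Fin (n+1) → ℝ} {γ : ℝ → Fin (n+1) → ℝ}
    (hΓ : ContDiffOn ℝ (⊤ : ℕ∞) Γ (Icc 0 1)) (hγ : ContDiffOn ℝ (⊤ : ℕ∞) γ (Icc 0 1)) (j : ℕ) :
    ContDiffOn ℝ (⊤ : ℕ∞) (s9W n Γ γ j) (Icc 0 1) := by
  rw [contDiffOn_pi]
  intro i
  have h : (fun t => s9W n Γ γ j t i)
      = fun t => ∑ k, Γ t k i * iteratedDerivWithin j γ (Icc 0 1) t k := by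
    funext t; exact s9W_apply Γ γ j t i
  rw [h]
  exact ContDiffOn.sum fun k _ =>
    (contDiffOn_pi.1 (contDiffOn_pi.1 hΓ k) i).mul
      (contDiffOn_pi.1 (s9_iter_smooth hγ j) k)

/-- coordinate of `derivWithin` of a function vanishing (in one coordinate) on the set. -/
private lemma s9_coord_deriv_zero {f : ℝ → Fin (n+1) → ℝ} {t : ℝ} (ht : t ∈ Icc (0:ℝ) 1)
    (hf : DifferentiableWithinAt ℝ f (Icc 0 1) t) {i : Fin (n+1)}
    (h0 : ∀ t' ∈ Icc (0:ℝ) 1, f t' i = 0) :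
    derivWithin f (Icc 0 1) t i = 0 := by
  have h1 := hasDerivWithinAt_pi.1 hf.hasDerivWithinAt i
  have h2 : HasDerivWithinAt (fun t' => f t' i) 0 (Icc 0 1) t :=
    (hasDerivWithinAt_const t _ (0:ℝ)).congr (fun x hx => h0 x hx) (h0 t ht)
  have e1 := h1.derivWithin (s9_hu t ht)
  have e2 := h2.derivWithin (s9_hu t ht)
  rw [e1] at e2
  exact e2

private lemma s9_logDerivMat_eq {Γ : ℝ → Fin (n+1) → Fin (n+1) → ℝ} {t : ℝ}
    (hO : (Matrix.of (Γ t))ᵀ * Matrix.of (Γ t) = 1) :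
    logDerivMat n Γ t = (Matrix.of (Γ t))ᵀ * Matrix.of (derivWithin Γ (Icc 0 1) t) := by
  rw [logDerivMat, Matrix.inv_eq_left_inv hO]

end stmt9aux
section stmt9aux2
open Matrix
variable {n : ℕ}

private lemma s9_key {Γ : ℝ → Fin (n+1) → Fin (n+1) → ℝ}
    (hΓ : ContDiffOn ℝ (⊤ : ℕ∞) Γ (Icc 0 1))
    (hO : ∀ t ∈ Icc (0:ℝ) 1, (Matrix.of (Γ t))ᵀ * Matrix.of (Γ t) = 1)
    {γ : ℝ → Fin (n+1) → ℝ} (hγ : ContDiffOn ℝ (⊤ : ℕ∞) γ (Icc 0 1)) (j : ℕ)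
    {t : ℝ} (ht : t ∈ Icc (0:ℝ) 1) :
    s9W n Γ γ (j+1) t
      = logDerivMat n Γ t *ᵥ s9W n Γ γ j t + derivWithin (s9W n Γ γ j) (Icc 0 1) t := by
  have hut := s9_hu t ht
  set G' := derivWithin Γ (Icc (0:ℝ) 1) t with hG'
  set w' := derivWithin (s9W n Γ γ j) (Icc (0:ℝ) 1) t with hw'
  have hΓd : HasDerivWithinAt Γ G' (Icc 0 1) t :=
    ((hΓ.differentiableOn (by simp)) t ht).hasDerivWithinAt
  have hWd : HasDerivWithinAt (s9W n Γ γ j) w' (Icc 0 1) t :=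
    (((s9W_smooth hΓ hγ j).differentiableOn (by simp)) t ht).hasDerivWithinAt
  have hprod : HasDerivWithinAt (fun t' => Matrix.of (Γ t') *ᵥ s9W n Γ γ j t')
      (fun i => ∑ k, (G' i k * s9W n Γ γ j t k + Γ t i k * w' k)) (Icc 0 1) t := by
    rw [hasDerivWithinAt_pi]
    intro i
    have h : (fun t' => (Matrix.of (Γ t') *ᵥ s9W n Γ γ j t') i)
        = fun t' => ∑ k, Γ t' i k * s9W n Γ γ j t' k := by
      funext t'; simp [Matrix.mulVec, dotProduct]
    rw [h]
    exact HasDerivWithinAt.fun_sum fun k _ =>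
      (hasDerivWithinAt_pi.1 (hasDerivWithinAt_pi.1 hΓd i) k).mul
        (hasDerivWithinAt_pi.1 hWd k)
  have heq : ∀ t' ∈ Icc (0:ℝ) 1,
      Matrix.of (Γ t') *ᵥ s9W n Γ γ j t' = iteratedDerivWithin j γ (Icc 0 1) t' := by
    intro t' ht'
    rw [s9W, Matrix.mulVec_mulVec, mul_eq_one_comm.mp (hO t' ht'), Matrix.one_mulVec]
  have hderiv : derivWithin (iteratedDerivWithin j γ (Icc 0 1)) (Icc 0 1) t
      = fun i => ∑ k, (G' i k * s9W n Γ γ j t k + Γ t i k * w' k) := by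
    rw [← derivWithin_congr heq (heq t ht)]
    exact hprod.derivWithin hut
  have hval : (fun i => ∑ k, (G' i k * s9W n Γ γ j t k + Γ t i k * w' k))
      = Matrix.of G' *ᵥ s9W n Γ γ j t + Matrix.of (Γ t) *ᵥ w' := by
    funext i
    simp [Matrix.mulVec, dotProduct, Finset.sum_add_distrib]
  rw [s9W, iteratedDerivWithin_succ, hderiv, hval, Matrix.mulVec_add,
    Matrix.mulVec_mulVec, Matrix.mulVec_mulVec, hO t ht, Matrix.one_mulVec,
    s9_logDerivMat_eq (hO t ht)]

private lemma s9_skew {Γ : ℝ → Fin (n+1) → Fin (n+1) → ℝ}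
    (hΓ : ContDiffOn ℝ (⊤ : ℕ∞) Γ (Icc 0 1))
    (hO : ∀ t ∈ Icc (0:ℝ) 1, (Matrix.of (Γ t))ᵀ * Matrix.of (Γ t) = 1)
    {t : ℝ} (ht : t ∈ Icc (0:ℝ) 1) :
    (logDerivMat n Γ t)ᵀ = -logDerivMat n Γ t := by
  have hut := s9_hu t ht
  set G' := derivWithin Γ (Icc (0:ℝ) 1) t with hG'
  have hΓd : HasDerivWithinAt Γ G' (Icc 0 1) t :=
    ((hΓ.differentiableOn (by simp)) t ht).hasDerivWithinAt
  have key : ∀ i j : Fin (n+1),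
      (∑ k, (G' k i * Γ t k j + Γ t k i * G' k j)) = 0 := by
    intro i j
    have h1 : HasDerivWithinAt (fun t' => ∑ k, Γ t' k i * Γ t' k j)
        (∑ k, (G' k i * Γ t k j + Γ t k i * G' k j)) (Icc 0 1) t :=
      HasDerivWithinAt.fun_sum fun k _ =>
        (hasDerivWithinAt_pi.1 (hasDerivWithinAt_pi.1 hΓd k) i).mul
          (hasDerivWithinAt_pi.1 (hasDerivWithinAt_pi.1 hΓd k) j)
    have h2 : HasDerivWithinAt (fun t' => ∑ k, Γ t' k i * Γ t' k j) 0 (Icc 0 1) t := by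
      refine (hasDerivWithinAt_const t _ ((1 : Matrix (Fin (n+1)) (Fin (n+1)) ℝ) i j)).congr
        (fun x hx => ?_) ?_
      · rw [← hO x hx]; simp [Matrix.mul_apply]
      · rw [← hO t ht]; simp [Matrix.mul_apply]
    have e1 := h1.derivWithin hut
    have e2 := h2.derivWithin hut
    rw [e1] at e2; exact e2
  ext i j
  have hk := key i j
  rw [Finset.sum_add_distrib] at hk
  have hΛ := s9_logDerivMat_eq (n := n) (Γ := Γ) (t := t) (hO t ht)
  have c1 : ∑ k, Γ t k j * G' k i = ∑ k, G' k i * Γ t k j :=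
    Finset.sum_congr rfl fun k _ => mul_comm _ _
  rw [← hG'] at hΛ
  have e1 : (logDerivMat n Γ t) j i = ∑ k, Γ t k j * G' k i := by
    rw [hΛ]; simp [Matrix.mul_apply]
  have e2 : (logDerivMat n Γ t) i j = ∑ k, Γ t k i * G' k j := by
    rw [hΛ]; simp [Matrix.mul_apply]
  rw [Matrix.transpose_apply, Matrix.neg_apply, e1, e2, c1]
  linarith

end stmt9aux2
open Matrix in
/-- For a smooth curve `Γ : [0,1] → SO(n+1)` with `Γ(0) = I`, the
following are equivalent: (a) `Λ(t) = Γ(t)⁻¹Γ'(t)` is skew-symmetric, tridiagonal with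
positive subdiagonal entries for all `t`; (b) `Γ` is the Frenet frame curve of a smooth
locally convex curve `γ : [0,1] → S^n`, i.e. there is a smooth upper triangular `R(t)`
with positive diagonal such that the matrix with columns `γ(t), γ'(t), …, γ^{(n)}(t)`
equals `Γ(t)R(t)` for all `t`. -/
theorem stmt_9 (n : ℕ) (hn : 1 ≤ n)
    (Γ : ℝ → Fin (n + 1) → Fin (n + 1) → ℝ)
    (hΓ : ContDiffOn ℝ (⊤ : ℕ∞) Γ (Icc 0 1))
    (hSO : ∀ t ∈ Icc (0 : ℝ) 1,
      Matrix.transpose (Matrix.of (Γ t)) * Matrix.of (Γ t) = 1 ∧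
        Matrix.det (Matrix.of (Γ t)) = 1)
    (hΓ0 : Matrix.of (Γ 0) = (1 : Matrix (Fin (n + 1)) (Fin (n + 1)) ℝ)) :
    (∀ t ∈ Icc (0 : ℝ) 1,
        Matrix.transpose (logDerivMat n Γ t) = -(logDerivMat n Γ t) ∧
        (∀ i : Fin n, 0 < logDerivMat n Γ t i.succ i.castSucc) ∧
        (∀ i j : Fin (n + 1), (i : ℕ) + 2 ≤ (j : ℕ) ∨ (j : ℕ) + 2 ≤ (i : ℕ) →
          logDerivMat n Γ t i j = 0))
      ↔
    (∃ γ : ℝ → Fin (n + 1) → ℝ, ∃ R : ℝ → Fin (n + 1) → Fin (n + 1) → ℝ,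
        ContDiffOn ℝ (⊤ : ℕ∞) γ (Icc 0 1) ∧
        (∀ t ∈ Icc (0 : ℝ) 1, ∑ i, γ t i ^ 2 = 1) ∧
        (∀ t ∈ Icc (0 : ℝ) 1, 0 < curveDet n γ (Icc 0 1) t) ∧
        ContDiffOn ℝ (⊤ : ℕ∞) R (Icc 0 1) ∧
        (∀ t ∈ Icc (0 : ℝ) 1, ∀ i j : Fin (n + 1), j < i → R t i j = 0) ∧
        (∀ t ∈ Icc (0 : ℝ) 1, ∀ i : Fin (n + 1), 0 < R t i i) ∧
        (∀ t ∈ Icc (0 : ℝ) 1,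
          (Matrix.of fun (i j : Fin (n + 1)) => iteratedDerivWithin (j : ℕ) γ (Icc 0 1) t i)
            = Matrix.of (Γ t) * Matrix.of (R t))) := by
  have hO : ∀ t ∈ Icc (0:ℝ) 1, (Matrix.of (Γ t))ᵀ * Matrix.of (Γ t) = 1 :=
    fun t ht => (hSO t ht).1
  have hO' : ∀ t ∈ Icc (0:ℝ) 1, Matrix.of (Γ t) * (Matrix.of (Γ t))ᵀ = 1 :=
    fun t ht => mul_eq_one_comm.mp (hO t ht)
  constructor
  · -- (a) → (b)
    intro ha
    set γ : ℝ → Fin (n+1) → ℝ := fun t i => Γ t i 0 with hγdef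
    have hγ : ContDiffOn ℝ (⊤ : ℕ∞) γ (Icc 0 1) :=
      contDiffOn_pi.2 fun i => contDiffOn_pi.1 (contDiffOn_pi.1 hΓ i) 0
    -- base computation
    have hW0 : ∀ t ∈ Icc (0:ℝ) 1, ∀ i : Fin (n+1),
        s9W n Γ γ 0 t i = (1 : Matrix (Fin (n+1)) (Fin (n+1)) ℝ) i 0 := by
      intro t ht i
      rw [← hO t ht]
      rw [s9W_apply]
      simp [Matrix.mul_apply, iteratedDerivWithin_zero, hγdef]
    -- main induction
    have key : ∀ j : ℕ, ∀ t ∈ Icc (0:ℝ) 1,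
        (∀ i : Fin (n+1), (j : ℕ) < (i : ℕ) → s9W n Γ γ j t i = 0) ∧
        (∀ i : Fin (n+1), (i : ℕ) = j → 0 < s9W n Γ γ j t i) := by
      intro j
      induction j with
      | zero =>
        intro t ht
        constructor
        · intro i hi
          rw [hW0 t ht i, Matrix.one_apply_ne]
          intro h; rw [h] at hi; simp at hi
        · intro i hi
          have : i = 0 := Fin.ext (by simpa using hi)
          rw [this, hW0 t ht 0, Matrix.one_apply_eq]; norm_num
      | succ j ih =>
        intro t ht
        have hrec : s9W n Γ γ (j+1) t = logDerivMat n Γ t *ᵥ s9W n Γ γ j t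
            + derivWithin (s9W n Γ γ j) (Icc 0 1) t := s9_key hΓ hO hγ j ht
        have hWdiff : DifferentiableWithinAt ℝ (s9W n Γ γ j) (Icc 0 1) t :=
          ((s9W_smooth hΓ hγ j).differentiableOn (by simp)) t ht
        have hd0 : ∀ i : Fin (n+1), (j : ℕ) < (i : ℕ) →
            derivWithin (s9W n Γ γ j) (Icc 0 1) t i = 0 := by
          intro i hi
          exact s9_coord_deriv_zero ht hWdiff (fun t' ht' => (ih t' ht').1 i hi)
        have hmv : ∀ i : Fin (n+1), (logDerivMat n Γ t *ᵥ s9W n Γ γ j t) i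
            = ∑ k, logDerivMat n Γ t i k * s9W n Γ γ j t k := by
          intro i; simp [Matrix.mulVec, dotProduct]
        constructor
        · intro i hi
          have hi' : (j : ℕ) < (i : ℕ) := by omega
          rw [hrec]
          simp only [Pi.add_apply]
          rw [hmv, hd0 i hi', Finset.sum_eq_zero, add_zero]
          intro k _
          by_cases hk : (j : ℕ) < (k : ℕ)
          · rw [(ih t ht).1 k hk, mul_zero]
          · rw [(ha t ht).2.2 i k (Or.inr (by omega)), zero_mul]
        · intro i hi
          have hjn : j < n := by have := i.isLt; omega
          have hjn1 : j < n + 1 := by omega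
          set k0 : Fin (n+1) := ⟨j, hjn1⟩ with hk0
          rw [hrec]
          simp only [Pi.add_apply]
          rw [hmv, hd0 i (by omega)]
          rw [Finset.sum_eq_single_of_mem k0 (Finset.mem_univ _)]
          · have hpos1 : 0 < s9W n Γ γ j t k0 := (ih t ht).2 k0 rfl
            have hfin : i = (⟨j, hjn⟩ : Fin n).succ := Fin.ext (by simpa using hi)
            have hfin2 : k0 = (⟨j, hjn⟩ : Fin n).castSucc := Fin.ext rfl
            have hpos2 : 0 < logDerivMat n Γ t i k0 := by
              rw [hfin, hfin2]; exact (ha t ht).2.1 ⟨j, hjn⟩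
            have := mul_pos hpos2 hpos1
            linarith
          · intro k _ hk
            by_cases hkj : (j : ℕ) < (k : ℕ)
            · rw [(ih t ht).1 k hkj, mul_zero]
            · have hkj' : (k : ℕ) < j := by
                rcases lt_or_eq_of_le (not_lt.mp hkj) with h | h
                · exact h
                · exact absurd (Fin.ext h) hk
              rw [(ha t ht).2.2 i k (Or.inr (by omega)), zero_mul]
    -- assemble
    refine ⟨γ, fun t i j => s9W n Γ γ (j : ℕ) t i, hγ, ?_, ?_, ?_, ?_, ?_, ?_⟩
    · -- unit sphere
      intro t ht
      have := congrFun (congrFun (hO t ht) 0) 0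
      rw [Matrix.mul_apply] at this
      simp only [Matrix.transpose_apply, Matrix.of_apply, Matrix.one_apply_eq] at this
      calc ∑ i, γ t i ^ 2 = ∑ i, Γ t i 0 * Γ t i 0 := by
            apply Finset.sum_congr rfl; intro i _; rw [hγdef]; ring
        _ = 1 := this
    · -- positive determinant
      intro t ht
      have hframe : (Matrix.of fun (i j : Fin (n+1)) =>
          iteratedDerivWithin (j : ℕ) γ (Icc 0 1) t i)
          = Matrix.of (Γ t) * Matrix.of (fun (i j : Fin (n+1)) => s9W n Γ γ (j : ℕ) t i) := by
        ext i j
        rw [Matrix.mul_apply]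
        simp only [Matrix.of_apply]
        have : ∑ k, Γ t i k * s9W n Γ γ (j:ℕ) t k = (Matrix.of (Γ t) *ᵥ s9W n Γ γ (j:ℕ) t) i := by
          simp [Matrix.mulVec, dotProduct]
        rw [this]
        simp only [s9W]
        rw [Matrix.mulVec_mulVec, hO' t ht, Matrix.one_mulVec]
      rw [curveDet, hframe, Matrix.det_mul, (hSO t ht).2, one_mul]
      have htri : Matrix.BlockTriangular
          (Matrix.of (fun (i j : Fin (n+1)) => s9W n Γ γ (j:ℕ) t i)) id := by
        intro i j hij
        exact (key (j:ℕ) t ht).1 i (by simpa using hij)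
      rw [Matrix.det_of_upperTriangular htri]
      apply Finset.prod_pos
      intro i _
      exact (key (i:ℕ) t ht).2 i rfl
    · -- R smooth
      apply contDiffOn_pi.2
      intro i
      apply contDiffOn_pi.2
      intro j
      exact contDiffOn_pi.1 (s9W_smooth hΓ hγ (j:ℕ)) i
    · -- upper triangular
      intro t ht i j hij
      exact (key (j:ℕ) t ht).1 i hij
    · -- positive diagonal
      intro t ht i
      exact (key (i:ℕ) t ht).2 i rfl
    · -- frame equation
      intro t ht
      ext i j
      rw [Matrix.mul_apply]
      simp only [Matrix.of_apply]
      have : ∑ k, Γ t i k * s9W n Γ γ (j:ℕ) t k = (Matrix.of (Γ t) *ᵥ s9W n Γ γ (j:ℕ) t) i := by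
        simp [Matrix.mulVec, dotProduct]
      rw [this]
      simp only [s9W]
      rw [Matrix.mulVec_mulVec, hO' t ht, Matrix.one_mulVec]
  · -- (b) → (a)
    rintro ⟨γ, R, hγ, _hsph, _hdet, _hRs, hR0, hRpos, hFr⟩
    have hWR : ∀ t ∈ Icc (0:ℝ) 1, ∀ (m : Fin (n+1)) (i : Fin (n+1)),
        s9W n Γ γ (m : ℕ) t i = R t i m := by
      intro t ht m i
      rw [s9W_apply]
      have hcol : ∀ k, iteratedDerivWithin (m : ℕ) γ (Icc 0 1) t k
          = (Matrix.of (Γ t) * Matrix.of (R t)) k m := by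
        intro k
        exact congrFun (congrFun (hFr t ht) k) m
      have e1 : ∑ k, Γ t k i * iteratedDerivWithin (m : ℕ) γ (Icc 0 1) t k
          = ∑ k, Γ t k i * (Matrix.of (Γ t) * Matrix.of (R t)) k m :=
        Finset.sum_congr rfl fun k _ => by rw [hcol k]
      have e2 : ∑ k, Γ t k i * (Matrix.of (Γ t) * Matrix.of (R t)) k m
          = ((Matrix.of (Γ t))ᵀ * (Matrix.of (Γ t) * Matrix.of (R t))) i m := by
        simp [Matrix.mul_apply]
      rw [e1, e2, ← Matrix.mul_assoc, hO t ht, Matrix.one_mul]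
      rfl
    have hd0 : ∀ (m : ℕ), m ≤ n → ∀ t ∈ Icc (0:ℝ) 1, ∀ i : Fin (n+1), m < (i : ℕ) →
        derivWithin (s9W n Γ γ m) (Icc 0 1) t i = 0 := by
      intro m hm t ht i hi
      refine s9_coord_deriv_zero ht
        (((s9W_smooth hΓ hγ m).differentiableOn (by simp)) t ht) (fun t' ht' => ?_)
      have : s9W n Γ γ ((⟨m, by omega⟩ : Fin (n+1)) : ℕ) t' i = R t' i ⟨m, by omega⟩ :=
        hWR t' ht' ⟨m, by omega⟩ i
      simp only [Fin.val_mk] at this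
      rw [this]
      exact hR0 t' ht' i ⟨m, by omega⟩ (by simpa [Fin.lt_def] using hi)
    have QQ : ∀ m : ℕ, ∀ t ∈ Icc (0:ℝ) 1, ∀ i k : Fin (n+1), (k : ℕ) = m →
        ((m + 2 ≤ (i : ℕ) → logDerivMat n Γ t i k = 0) ∧
         ((i : ℕ) = m + 1 → 0 < logDerivMat n Γ t i k)) := by
      intro m
      induction m using Nat.strong_induction_on with
      | _ m IH =>
        intro t ht i k hk
        have hmn : m ≤ n := by have := k.isLt; omega
        have hrec := s9_key hΓ hO hγ m ht
        have hco : s9W n Γ γ (m+1) t i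
            = (∑ k', logDerivMat n Γ t i k' * s9W n Γ γ m t k')
              + derivWithin (s9W n Γ γ m) (Icc 0 1) t i := by
          rw [hrec]; simp [Matrix.mulVec, dotProduct]
        have hWm : ∀ k' : Fin (n+1), s9W n Γ γ m t k' = R t k' k := by
          intro k'
          have := hWR t ht k k'
          rwa [hk] at this
        -- common sum reduction (when m + 1 ≤ i)
        have hsum : (m + 1 ≤ (i : ℕ)) →
            ∑ k', logDerivMat n Γ t i k' * s9W n Γ γ m t k'
              = logDerivMat n Γ t i k * R t k k := by
          intro hi
          have : ∀ k', s9W n Γ γ m t k' = R t k' k := hWm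
          rw [Finset.sum_congr rfl (fun k' _ => by rw [this k'])]
          refine Finset.sum_eq_single_of_mem k (Finset.mem_univ k) (fun k' _ hk' => ?_)
          rcases lt_or_gt_of_ne (fun h : (k' : ℕ) = (k : ℕ) => hk' (Fin.ext h)) with h | h
          · rw [(IH (k' : ℕ) (by omega) t ht i k' rfl).1 (by omega), zero_mul]
          · rw [hR0 t ht k' k (Fin.lt_def.mpr h), mul_zero]
        constructor
        · intro hi
          have hm1 : m + 1 ≤ n := by have := i.isLt; omega
          have hL : s9W n Γ γ (m+1) t i = 0 := by
            have := hWR t ht ⟨m+1, by omega⟩ i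
            simp only [Fin.val_mk] at this
            rw [this]
            exact hR0 t ht i ⟨m+1, by omega⟩ (by simp only [Fin.lt_def, Fin.val_mk]; omega)
          rw [hL, hsum (by omega), hd0 m hmn t ht i (by omega), add_zero] at hco
          have hkk := hRpos t ht k
          have h0 : logDerivMat n Γ t i k * R t k k = 0 := hco.symm
          rcases mul_eq_zero.mp h0 with h | h
          · exact h
          · exact absurd h (ne_of_gt hkk)
        · intro hi
          have hm1 : m + 1 ≤ n := by have := i.isLt; omega
          have hL : s9W n Γ γ (m+1) t i = R t i i := by
            have := hWR t ht ⟨m+1, by omega⟩ i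
            simp only [Fin.val_mk] at this
            rw [this]
            congr 1
            exact Fin.ext (by simp [hi])
          rw [hL, hsum (by omega), hd0 m hmn t ht i (by omega), add_zero] at hco
          have hkk := hRpos t ht k
          have hii := hRpos t ht i
          rw [hco] at hii
          nlinarith
    intro t ht
    refine ⟨s9_skew hΓ hO ht, ?_, ?_⟩
    · intro i
      exact (QQ ((i.castSucc : Fin (n+1)) : ℕ) t ht i.succ i.castSucc rfl).2 (by simp)
    · intro i j hij
      rcases hij with h | h
      · have h0 : logDerivMat n Γ t j i = 0 := (QQ (i : ℕ) t ht j i rfl).1 h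
        have hs := s9_skew hΓ hO (n := n) (Γ := Γ) ht
        have := congrFun (congrFun hs i) j
        simp only [Matrix.transpose_apply, Matrix.neg_apply] at this
        rw [h0] at this
        linarith
      · exact (QQ (j : ℕ) t ht i j rfl).1 h
end

section
/- Let ρ ∈ (0, π/2) and let σ_ρ : [0,1] → S² be defined by σ_ρ(t) = cos ρ · (cos ρ, 0, sin ρ) + sin ρ · (sin ρ cos(2πt), sin(2πt), −cos ρ cos(2πt)). Then σ_ρ is convex: for every nonzero h ∈ ℝ³, σ_ρ intersects the hyperplane {x ∈ ℝ³ : h·x = 0} with total multiplicity at most 2 on (0,1). -/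
/-! Along `σ_ρ`, `h·σ_ρ(t) = f(2πt)` with `f θ = A + B cos θ + C sin θ`, and `(A, B, C) ≠ 0`
because `sin ρ, cos ρ ≠ 0`. Expanding around a zero `θ` of `f`,
`f(θ + 2y) = 2 sin y (A sin y + f'(θ) cos y)`, so each further zero in the same period gives a
linear relation between `A` and `f'(θ)`. A double zero plus another zero, or three simple zeros,
therefore force `A = f'(θ) = 0`, hence `B = C = 0`; and `f'' = A - f` excludes triple zeros. -/

open Set Real

/-- The Euclidean dot product on `ℝ^k`. -/
def dotv {k : ℕ} (v w : Fin k → ℝ) : ℝ := ∑ i, v i * w i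

/-- The curve `γ` intersects the hyperplane `{x : h·x = 0}` with total multiplicity at
most `N` on the open interval `(a,b)`: for any distinct points `t₁, …, t_j ∈ (a,b)` and
positive integers `m₁, …, m_j` such that `f = h·γ` vanishes at `t_i` together with its
first `m_i − 1` derivatives, one has `m₁ + ⋯ + m_j ≤ N`. -/
def MultAtMost {k : ℕ} (γ : ℝ → Fin k → ℝ) (a b : ℝ) (h : Fin k → ℝ) (N : ℕ) : Prop :=
  ∀ (j : ℕ) (t : Fin j → ℝ) (m : Fin j → ℕ),
    (∀ i, t i ∈ Ioo a b) → Function.Injective t → (∀ i, 1 ≤ m i) →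
    (∀ i, ∀ l < m i, iteratedDeriv l (fun s => dotv h (γ s)) (t i) = 0) →
    ∑ i, m i ≤ N

/-- The circle `σ_ρ(t) = cos ρ (cos ρ, 0, sin ρ) + sin ρ (sin ρ cos 2πt, sin 2πt, −cos ρ cos 2πt)`. -/
noncomputable def sigmaC (ρ : ℝ) (t : ℝ) : Fin 3 → ℝ :=
  ![Real.cos ρ * Real.cos ρ + Real.sin ρ * (Real.sin ρ * Real.cos (2 * π * t)),
    Real.sin ρ * Real.sin (2 * π * t),
    Real.cos ρ * Real.sin ρ + Real.sin ρ * (-(Real.cos ρ) * Real.cos (2 * π * t))]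

noncomputable def trigPoly (A B C θ : ℝ) : ℝ := A + B * cos θ + C * sin θ

/-- `F` has a zero of multiplicity at least `n` at `t`. -/
def VanishesTo (F : ℝ → ℝ) (n : ℕ) (t : ℝ) : Prop := ∀ l < n, iteratedDeriv l F t = 0

section VanishesTo

variable {F : ℝ → ℝ}

lemma VanishesTo.mono {m n : ℕ} {t : ℝ} (hF : VanishesTo F n t) (hmn : m ≤ n) :
    VanishesTo F m t :=
  fun l hl => hF l (hl.trans_le hmn)

lemma vanishesTo_one_iff {t : ℝ} : VanishesTo F 1 t ↔ F t = 0 := by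
  simp [VanishesTo]

lemma vanishesTo_comp_const_mul_iff (hF : ∀ n : ℕ, ContDiff ℝ n F) {c : ℝ} (hc : c ≠ 0)
    {n : ℕ} {t : ℝ} : VanishesTo (fun s => F (c * s)) n t ↔ VanishesTo F n (c * t) := by
  refine forall₂_congr fun l _ => ?_
  rw [iteratedDeriv_comp_const_mul (hF l) c]
  simp [hc]

lemma sum_le_two_of_vanishesTo {a b : ℝ}
    (htriple : ∀ t ∈ Ioo a b, ¬ VanishesTo F 3 t)
    (hdouble : ∀ t ∈ Ioo a b, ∀ t' ∈ Ioo a b, VanishesTo F 2 t → F t' = 0 → t' = t)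
    (hthree : ∀ t₁ ∈ Ioo a b, ∀ t₂ ∈ Ioo a b, ∀ t₃ ∈ Ioo a b, t₁ ≠ t₂ → t₁ ≠ t₃ → t₂ ≠ t₃ →
      F t₁ = 0 → F t₂ = 0 → F t₃ = 0 → False)
    {j : ℕ} {t : Fin j → ℝ} {m : Fin j → ℕ} (ht : ∀ i, t i ∈ Ioo a b)
    (hinj : Function.Injective t) (hm : ∀ i, 1 ≤ m i) (hv : ∀ i, VanishesTo F (m i) (t i)) :
    ∑ i, m i ≤ 2 := by
  have hzero i : F (t i) = 0 := vanishesTo_one_iff.1 ((hv i).mono (hm i))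
  have hle i : m i ≤ 2 := by
    by_contra! h3
    exact htriple _ (ht i) ((hv i).mono h3)
  by_cases hdouble_at : ∃ i, 2 ≤ m i
  · obtain ⟨i, hi⟩ := hdouble_at
    have huniv : (Finset.univ : Finset (Fin j)) = {i} :=
      Finset.eq_singleton_iff_unique_mem.2 ⟨Finset.mem_univ _, fun i' _ =>
        hinj (hdouble _ (ht i) _ (ht i') ((hv i).mono hi) (hzero i'))⟩
    simpa [huniv] using hle i
  · push Not at hdouble_at
    have hj : j ≤ 2 := by
      by_contra! hj
      have hne {p q : ℕ} (hp : p < j) (hq : q < j) (hpq : p ≠ q) : t ⟨p, hp⟩ ≠ t ⟨q, hq⟩ :=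
        hinj.ne (Fin.ne_of_val_ne hpq)
      exact hthree _ (ht ⟨0, by omega⟩) _ (ht ⟨1, by omega⟩) _ (ht ⟨2, by omega⟩)
        (hne _ _ (by norm_num)) (hne _ _ (by norm_num)) (hne _ _ (by norm_num))
        (hzero _) (hzero _) (hzero _)
    calc ∑ i, m i ≤ ∑ _i : Fin j, 1 := Finset.sum_le_sum fun i _ => by
            have := hdouble_at i; omega
      _ = j := by simp
      _ ≤ 2 := hj

end VanishesTo

section TrigPoly

variable (A B C : ℝ)

lemma contDiff_trigPoly {n : WithTop ℕ∞} : ContDiff ℝ n (trigPoly A B C) := by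
  unfold trigPoly; fun_prop

lemma hasDerivAt_trigPoly (θ : ℝ) : HasDerivAt (trigPoly A B C) (trigPoly 0 C (-B) θ) θ := by
  unfold trigPoly
  exact ((((hasDerivAt_cos θ).const_mul B).const_add A).add
    ((hasDerivAt_sin θ).const_mul C)).congr_deriv (by ring)

lemma deriv_trigPoly : deriv (trigPoly A B C) = trigPoly 0 C (-B) :=
  funext fun θ => (hasDerivAt_trigPoly A B C θ).deriv

lemma iteratedDeriv_one_trigPoly : iteratedDeriv 1 (trigPoly A B C) = trigPoly 0 C (-B) := by
  rw [iteratedDeriv_one, deriv_trigPoly]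

lemma iteratedDeriv_two_trigPoly : iteratedDeriv 2 (trigPoly A B C) = trigPoly 0 (-B) (-C) := by
  rw [iteratedDeriv_succ, iteratedDeriv_one_trigPoly, deriv_trigPoly]

lemma trigPoly_add_two_mul (θ y : ℝ) :
    trigPoly A B C (θ + 2 * y) =
      trigPoly A B C θ * cos (2 * y) + 2 * sin y * (A * sin y + trigPoly 0 C (-B) θ * cos y) := by
  simp only [trigPoly, cos_add, sin_add, cos_two_mul, sin_two_mul]
  linear_combination (-2 * A) * sin_sq_add_cos_sq y

variable {A B C} {θ : ℝ}

lemma eq_zero_of_trigPoly_eq_zero_of_deriv (hA : A = 0) (h0 : trigPoly A B C θ = 0)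
    (h1 : trigPoly 0 C (-B) θ = 0) : B = 0 ∧ C = 0 := by
  simp only [trigPoly, hA] at h0 h1
  constructor
  · linear_combination cos θ * h0 - sin θ * h1 - B * sin_sq_add_cos_sq θ
  · linear_combination sin θ * h0 + cos θ * h1 - C * sin_sq_add_cos_sq θ

lemma sin_half_sub_ne_zero {a θ' : ℝ} (hθ : θ ∈ Ioo a (a + 2 * π)) (hθ' : θ' ∈ Ioo a (a + 2 * π))
    (hne : θ ≠ θ') : sin ((θ' - θ) / 2) ≠ 0 := by
  rw [Ne, sin_eq_zero_iff_of_lt_of_lt (by linarith [hθ.2, hθ'.1]) (by linarith [hθ.1, hθ'.2])]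
  intro h
  exact hne (by linarith)

lemma trigPoly_eq_zero_two_points {θ' : ℝ} (h0 : trigPoly A B C θ = 0)
    (h1 : trigPoly A B C θ' = 0) (hs : sin ((θ' - θ) / 2) ≠ 0) :
    A * sin ((θ' - θ) / 2) + trigPoly 0 C (-B) θ * cos ((θ' - θ) / 2) = 0 := by
  have key := trigPoly_add_two_mul A B C θ ((θ' - θ) / 2)
  rw [show θ + 2 * ((θ' - θ) / 2) = θ' by ring, h0, h1, zero_mul, zero_add, eq_comm,
    mul_eq_zero] at key
  exact key.resolve_left (mul_ne_zero two_ne_zero hs)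

lemma eq_zero_of_vanishesTo_three (hv : VanishesTo (trigPoly A B C) 3 θ) :
    A = 0 ∧ B = 0 ∧ C = 0 := by
  have h0 : trigPoly A B C θ = 0 := hv 0 (by norm_num)
  have h1 : trigPoly 0 C (-B) θ = 0 := by simpa [deriv_trigPoly] using hv 1
  have h2 : trigPoly 0 (-B) (-C) θ = 0 := by simpa [iteratedDeriv_two_trigPoly] using hv 2
  have hA : A = 0 := by simp only [trigPoly] at h0 h2; linarith
  exact ⟨hA, eq_zero_of_trigPoly_eq_zero_of_deriv hA h0 h1⟩

lemma eq_zero_of_vanishesTo_two_of_eq_zero {a θ' : ℝ} (hθ : θ ∈ Ioo a (a + 2 * π))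
    (hθ' : θ' ∈ Ioo a (a + 2 * π)) (hne : θ ≠ θ') (hv : VanishesTo (trigPoly A B C) 2 θ)
    (h' : trigPoly A B C θ' = 0) : A = 0 ∧ B = 0 ∧ C = 0 := by
  have h0 : trigPoly A B C θ = 0 := hv 0 (by norm_num)
  have h1 : trigPoly 0 C (-B) θ = 0 := by simpa [deriv_trigPoly] using hv 1
  have hs := sin_half_sub_ne_zero hθ hθ' hne
  have hA : A = 0 := by
    simpa [h1, hs] using trigPoly_eq_zero_two_points h0 h' hs
  exact ⟨hA, eq_zero_of_trigPoly_eq_zero_of_deriv hA h0 h1⟩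

lemma eq_zero_of_three_zeros {a θ₁ θ₂ θ₃ : ℝ} (h₁ : θ₁ ∈ Ioo a (a + 2 * π))
    (h₂ : θ₂ ∈ Ioo a (a + 2 * π)) (h₃ : θ₃ ∈ Ioo a (a + 2 * π))
    (h₁₂ : θ₁ ≠ θ₂) (h₁₃ : θ₁ ≠ θ₃) (h₂₃ : θ₂ ≠ θ₃) (e₁ : trigPoly A B C θ₁ = 0)
    (e₂ : trigPoly A B C θ₂ = 0) (e₃ : trigPoly A B C θ₃ = 0) : A = 0 ∧ B = 0 ∧ C = 0 := by
  set y₂ := (θ₂ - θ₁) / 2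
  set y₃ := (θ₃ - θ₁) / 2
  set D := trigPoly 0 C (-B) θ₁
  have k₂ : A * sin y₂ + D * cos y₂ = 0 :=
    trigPoly_eq_zero_two_points e₁ e₂ (sin_half_sub_ne_zero h₁ h₂ h₁₂)
  have k₃ : A * sin y₃ + D * cos y₃ = 0 :=
    trigPoly_eq_zero_two_points e₁ e₃ (sin_half_sub_ne_zero h₁ h₃ h₁₃)
  have hs : sin (y₂ - y₃) ≠ 0 := by
    rw [show y₂ - y₃ = (θ₂ - θ₃) / 2 by ring]
    exact sin_half_sub_ne_zero h₃ h₂ h₂₃.symm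
  have hA : A * sin (y₂ - y₃) = 0 := by
    rw [sin_sub]; linear_combination cos y₃ * k₂ - cos y₂ * k₃
  have hD : D * sin (y₂ - y₃) = 0 := by
    rw [sin_sub]; linear_combination sin y₂ * k₃ - sin y₃ * k₂
  have hA0 := (mul_eq_zero.1 hA).resolve_right hs
  exact ⟨hA0, eq_zero_of_trigPoly_eq_zero_of_deriv hA0 e₁ ((mul_eq_zero.1 hD).resolve_right hs)⟩

end TrigPoly

lemma sum_le_two_of_vanishesTo_trigPoly {A B C : ℝ} (hABC : ¬(A = 0 ∧ B = 0 ∧ C = 0)) {j : ℕ}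
    {t : Fin j → ℝ} {m : Fin j → ℕ} (ht : ∀ i, t i ∈ Ioo 0 1) (hinj : Function.Injective t)
    (hm : ∀ i, 1 ≤ m i) (hv : ∀ i, VanishesTo (fun s => trigPoly A B C (2 * π * s)) (m i) (t i)) :
    ∑ i, m i ≤ 2 := by
  have hc : 2 * π ≠ 0 := by positivity
  have hcomp {n : ℕ} {s : ℝ} := vanishesTo_comp_const_mul_iff (n := n) (t := s)
    (fun _ => contDiff_trigPoly A B C) hc
  have hmem {s : ℝ} (hs : s ∈ Ioo 0 1) : 2 * π * s ∈ Ioo 0 (0 + 2 * π) := by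
    rw [zero_add]
    constructor <;> nlinarith [hs.1, hs.2, pi_pos]
  have hne {s s' : ℝ} (h : s ≠ s') : 2 * π * s ≠ 2 * π * s' := (mul_right_injective₀ hc).ne h
  refine sum_le_two_of_vanishesTo ?_ ?_ ?_ ht hinj hm hv
  · exact fun s _ hv₃ => hABC (eq_zero_of_vanishesTo_three (hcomp.1 hv₃))
  · intro s hs s' hs' hv₂ h'
    by_contra hss'
    exact hABC (eq_zero_of_vanishesTo_two_of_eq_zero (hmem hs) (hmem hs') (hne (Ne.symm hss'))
      (hcomp.1 hv₂) h')
  · intro s₁ hs₁ s₂ hs₂ s₃ hs₃ h₁₂ h₁₃ h₂₃ e₁ e₂ e₃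
    exact hABC (eq_zero_of_three_zeros (hmem hs₁) (hmem hs₂) (hmem hs₃) (hne h₁₂) (hne h₁₃)
      (hne h₂₃) e₁ e₂ e₃)

lemma dotv_sigmaC (h : Fin 3 → ℝ) (ρ s : ℝ) :
    dotv h (sigmaC ρ s) = trigPoly (cos ρ * (h 0 * cos ρ + h 2 * sin ρ))
      (sin ρ * (h 0 * sin ρ - h 2 * cos ρ)) (h 1 * sin ρ) (2 * π * s) := by
  simp only [dotv, sigmaC, trigPoly, Fin.sum_univ_three, Matrix.cons_val_zero,
    Matrix.cons_val_one, Matrix.cons_val_two, Matrix.head_cons, Matrix.tail_cons]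
  ring

lemma eq_zero_of_sigmaC_coeffs_eq_zero {ρ : ℝ} (hsin : sin ρ ≠ 0) (hcos : cos ρ ≠ 0)
    {h : Fin 3 → ℝ} (hA : cos ρ * (h 0 * cos ρ + h 2 * sin ρ) = 0)
    (hB : sin ρ * (h 0 * sin ρ - h 2 * cos ρ) = 0) (hC : h 1 * sin ρ = 0) : h = 0 := by
  have e₁ := (mul_eq_zero.1 hA).resolve_left hcos
  have e₂ := (mul_eq_zero.1 hB).resolve_left hsin
  have h₀ : h 0 = 0 := by
    linear_combination cos ρ * e₁ + sin ρ * e₂ - h 0 * sin_sq_add_cos_sq ρ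
  have h₁ : h 1 = 0 := (mul_eq_zero.1 hC).resolve_right hsin
  have h₂ : h 2 = 0 := by
    linear_combination sin ρ * e₁ - cos ρ * e₂ - h 2 * sin_sq_add_cos_sq ρ
  funext i
  fin_cases i <;> assumption

/-- For `ρ ∈ (0, π/2)` the circle `σ_ρ : [0,1] → S²` is convex: it
meets every hyperplane through the origin with total multiplicity at most 2 on `(0,1)`. -/
theorem stmt_12 (ρ : ℝ) (hρ : ρ ∈ Ioo 0 (π / 2)) :
    ∀ h : Fin 3 → ℝ, h ≠ 0 → MultAtMost (sigmaC ρ) 0 1 h 2 := by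
  intro h hh j t m ht hinj hm hv
  have hsin : sin ρ ≠ 0 := (sin_pos_of_pos_of_lt_pi hρ.1 (by linarith [hρ.2, pi_pos])).ne'
  have hcos : cos ρ ≠ 0 := (cos_pos_of_mem_Ioo ⟨by linarith [hρ.1, pi_pos], hρ.2⟩).ne'
  simp_rw [dotv_sigmaC] at hv
  exact sum_le_two_of_vanishesTo_trigPoly
    (fun ⟨hA, hB, hC⟩ => hh (eq_zero_of_sigmaC_coeffs_eq_zero hsin hcos hA hB hC)) ht hinj hm hv
end

section
/- Let L : [0,1] → ℝ^{4×4} be a smooth matrix-valued curve such that for every t, L(t) is lower triangular with all diagonal entries equal to 1, and the matrix M(t) = L(t)⁻¹L'(t) satisfies: M(t)_{21} > 0, M(t)_{32} > 0, M(t)_{43} > 0, and all other entries of M(t) are zero. Then there do not exist two distinct times t₁, t₂ ∈ [0,1] such that L(t₁)_{21} = −L(t₁)_{43} and L(t₂)_{21} = −L(t₂)_{43}. -/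
open Set Real

/-- The logarithmic derivative `M(t) = L(t)⁻¹ L'(t)` of a matrix-valued curve
(derivative taken entrywise, within `[0,1]`). -/
noncomputable def MlogD (L : ℝ → Fin 4 → Fin 4 → ℝ) (t : ℝ) : Matrix (Fin 4) (Fin 4) ℝ :=
  (Matrix.of (L t))⁻¹ * Matrix.of (derivWithin L (Set.Icc 0 1) t)

/-- Let `L : [0,1] → ℝ^{4×4}` be a smooth curve of lower triangular
matrices with unit diagonal such that `M(t) = L(t)⁻¹L'(t)` has positive entries at
positions (2,1), (3,2), (4,3) and vanishes everywhere else. Then there are no two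
distinct times `t₁, t₂ ∈ [0,1]` with `L(tᵢ)₂₁ = −L(tᵢ)₄₃` for `i = 1, 2`. -/
theorem stmt_18 (L : ℝ → Fin 4 → Fin 4 → ℝ)
    (hL : ContDiffOn ℝ (⊤ : ℕ∞) L (Icc 0 1))
    (hlow : ∀ t ∈ Icc (0 : ℝ) 1, ∀ i j : Fin 4, i < j → L t i j = 0)
    (hdiag : ∀ t ∈ Icc (0 : ℝ) 1, ∀ i : Fin 4, L t i i = 1)
    (hMpos : ∀ t ∈ Icc (0 : ℝ) 1,
      0 < MlogD L t 1 0 ∧ 0 < MlogD L t 2 1 ∧ 0 < MlogD L t 3 2)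
    (hMzero : ∀ t ∈ Icc (0 : ℝ) 1, ∀ i j : Fin 4,
      ¬((i, j) = ((1 : Fin 4), (0 : Fin 4)) ∨ (i, j) = ((2 : Fin 4), (1 : Fin 4)) ∨
          (i, j) = ((3 : Fin 4), (2 : Fin 4))) →
        MlogD L t i j = 0) :
    ¬ ∃ t₁ ∈ Icc (0 : ℝ) 1, ∃ t₂ ∈ Icc (0 : ℝ) 1, t₁ ≠ t₂ ∧
        L t₁ 1 0 = -(L t₁ 3 2) ∧ L t₂ 1 0 = -(L t₂ 3 2) := by
  rintro ⟨t₁, ht₁, t₂, ht₂, hne, h₁, h₂⟩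
  have hdiff : DifferentiableOn ℝ L (Icc 0 1) := hL.differentiableOn (by simp)
  have hdet : ∀ t ∈ Icc (0 : ℝ) 1, (Matrix.of (L t)).det = 1 := by
    intro t ht
    have h := Matrix.det_of_lowerTriangular (Matrix.of (L t))
      (fun i j hij => hlow t ht i j hij)
    rw [h]
    simp [hdiag t ht]
  have hML : ∀ t ∈ Icc (0 : ℝ) 1,
      Matrix.of (derivWithin L (Icc 0 1) t) = Matrix.of (L t) * MlogD L t := by
    intro t ht
    rw [MlogD, ← Matrix.mul_assoc,
      Matrix.mul_nonsing_inv _ (by rw [hdet t ht]; exact isUnit_one), Matrix.one_mul]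
  have hd10 : ∀ t ∈ Icc (0 : ℝ) 1, derivWithin L (Icc 0 1) t 1 0 = MlogD L t 1 0 := by
    intro t ht
    have h := congrFun (congrFun (hML t ht) 1) 0
    have h00 : MlogD L t 0 0 = 0 := hMzero t ht 0 0 (by decide)
    have h20 : MlogD L t 2 0 = 0 := hMzero t ht 2 0 (by decide)
    have h30 : MlogD L t 3 0 = 0 := hMzero t ht 3 0 (by decide)
    rw [Matrix.mul_apply, Fin.sum_univ_four] at h
    simp only [Matrix.of_apply] at h
    rw [h, h00, h20, h30, hdiag t ht 1]
    ring
  have hd32 : ∀ t ∈ Icc (0 : ℝ) 1, derivWithin L (Icc 0 1) t 3 2 = MlogD L t 3 2 := by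
    intro t ht
    have h := congrFun (congrFun (hML t ht) 3) 2
    have h02 : MlogD L t 0 2 = 0 := hMzero t ht 0 2 (by decide)
    have h12 : MlogD L t 1 2 = 0 := hMzero t ht 1 2 (by decide)
    have h22 : MlogD L t 2 2 = 0 := hMzero t ht 2 2 (by decide)
    rw [Matrix.mul_apply, Fin.sum_univ_four] at h
    simp only [Matrix.of_apply] at h
    rw [h, h02, h12, h22, hdiag t ht 3]
    ring
  set f : ℝ → ℝ := fun t => L t 1 0 + L t 3 2 with hf
  have hfd : ∀ t ∈ Icc (0 : ℝ) 1,
      HasDerivWithinAt f (MlogD L t 1 0 + MlogD L t 3 2) (Icc 0 1) t := by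
    intro t ht
    have hd : HasDerivWithinAt L (derivWithin L (Icc 0 1) t) (Icc 0 1) t :=
      (hdiff t ht).hasDerivWithinAt
    have h10 := hasDerivWithinAt_pi.mp (hasDerivWithinAt_pi.mp hd 1) 0
    have h32 := hasDerivWithinAt_pi.mp (hasDerivWithinAt_pi.mp hd 3) 2
    rw [hd10 t ht] at h10
    rw [hd32 t ht] at h32
    exact h10.add h32
  have hcont : ContinuousOn f (Icc 0 1) := fun x hx =>
    (hfd x hx).continuousWithinAt
  have hmono : StrictMonoOn f (Icc 0 1) := by
    apply strictMonoOn_of_deriv_pos (convex_Icc 0 1) hcont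
    intro x hx
    rw [interior_Icc] at hx
    have hxs : x ∈ Icc (0 : ℝ) 1 := Ioo_subset_Icc_self hx
    have hda := (hfd x hxs).hasDerivAt (Icc_mem_nhds hx.1 hx.2)
    rw [hda.deriv]
    have hp := hMpos x hxs
    linarith [hp.1, hp.2.2]
  have hf1 : f t₁ = 0 := by simp [hf, h₁]
  have hf2 : f t₂ = 0 := by simp [hf, h₂]
  rcases hne.lt_or_gt with h | h
  · have := hmono ht₁ ht₂ h; linarith
  · have := hmono ht₂ ht₁ h; linarith
end

section
/- Let n ≥ 1 and let γ : [0,1] → S^n ⊂ ℝ^{n+1} be a smooth curve such that for every nonzero h ∈ ℝ^{n+1}, γ intersects the hyperplane {x : h·x = 0} with total multiplicity at most n on (0,1). Then for every t ∈ (0,1), the vectors γ(t), γ'(t), …, γ^{(n)}(t) are linearly independent. In particular, every globally convex curve satisfies det(γ(t), γ'(t), …, γ^{(n)}(t)) ≠ 0 for all t ∈ (0,1). -/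
open Set Real

/-- The curve `γ` (defined on `[a,b]`, with one-sided derivatives at the endpoints)
intersects the hyperplane `{x : h·x = 0}` with total multiplicity at most `N` on the
open interval `(a,b)`: for any distinct points `t₁, …, t_j ∈ (a,b)` and positive
integers `m₁, …, m_j` such that `f = h·γ` vanishes at `t_i` together with its first
`m_i − 1` derivatives, one has `m₁ + ⋯ + m_j ≤ N`. -/
def MultAtMostW {k : ℕ} (γ : ℝ → Fin k → ℝ) (a b : ℝ) (h : Fin k → ℝ) (N : ℕ) : Prop :=
  ∀ (j : ℕ) (t : Fin j → ℝ) (m : Fin j → ℕ),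
    (∀ i, t i ∈ Ioo a b) → Function.Injective t → (∀ i, 1 ≤ m i) →
    (∀ i, ∀ l < m i, iteratedDerivWithin l (fun s => dotv h (γ s)) (Icc a b) (t i) = 0) →
    ∑ i, m i ≤ N

/-- The dot product with a fixed vector as a continuous linear map. -/
noncomputable def dotCLM {k : ℕ} (h : Fin k → ℝ) : (Fin k → ℝ) →L[ℝ] ℝ :=
  LinearMap.toContinuousLinearMap
    { toFun := fun v => dotv h v
      map_add' := by
        intro v w
        simp [dotv, mul_add, Finset.sum_add_distrib]
      map_smul' := by
        intro c v
        simp only [dotv, smul_eq_mul, Pi.smul_apply, RingHom.id_apply, Finset.mul_sum]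
        exact Finset.sum_congr rfl fun _ _ => by ring }

lemma iteratedDerivWithin_dot {k : ℕ} (h : Fin k → ℝ) (γ : ℝ → Fin k → ℝ)
    {s : Set ℝ} (hs : UniqueDiffOn ℝ s) (hγ : ContDiffOn ℝ (⊤ : ℕ∞) γ s)
    {x : ℝ} (hx : x ∈ s) (l : ℕ) :
    iteratedDerivWithin l (fun t => dotv h (γ t)) s x =
      dotv h (iteratedDerivWithin l γ s x) := by
  have : (fun t => dotv h (γ t)) = (dotCLM h) ∘ γ := rfl
  rw [this]
  have := (dotCLM h).iteratedFDerivWithin_comp_left (hγ x hx) hs hx (i := l) (by exact_mod_cast le_top)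
  simp only [iteratedDerivWithin, this]
  rfl

/-- If a smooth curve `γ : [0,1] → S^n` meets every hyperplane through
the origin with total multiplicity at most `n` on `(0,1)` (i.e. `γ` is globally convex),
then for every `t ∈ (0,1)` the vectors `γ(t), γ'(t), …, γ^{(n)}(t)` are linearly
independent; in particular `det(γ(t), γ'(t), …, γ^{(n)}(t)) ≠ 0`. -/
theorem stmt_19 (n : ℕ) (hn : 1 ≤ n) (γ : ℝ → Fin (n + 1) → ℝ)
    (hγ : ContDiffOn ℝ (⊤ : ℕ∞) γ (Icc 0 1))
    (hsph : ∀ t ∈ Icc (0 : ℝ) 1, ∑ i, γ t i ^ 2 = 1)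
    (hconv : ∀ h : Fin (n + 1) → ℝ, h ≠ 0 → MultAtMostW γ 0 1 h n) :
    ∀ t ∈ Ioo (0 : ℝ) 1,
      LinearIndependent ℝ (fun k : Fin (n + 1) => iteratedDerivWithin (k : ℕ) γ (Icc 0 1) t) ∧
      Matrix.det (Matrix.of fun (i j : Fin (n + 1)) =>
        iteratedDerivWithin (j : ℕ) γ (Icc 0 1) t i) ≠ 0 := by
  intro t ht
  set M : Matrix (Fin (n + 1)) (Fin (n + 1)) ℝ :=
    Matrix.of fun (i j : Fin (n + 1)) => iteratedDerivWithin (j : ℕ) γ (Icc 0 1) t i with hM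
  have hdet : M.det ≠ 0 := by
    intro hdet0
    obtain ⟨h, hne, hmul⟩ := Matrix.exists_vecMul_eq_zero_iff.mpr hdet0
    have hud : UniqueDiffOn ℝ (Icc (0:ℝ) 1) := uniqueDiffOn_Icc (by norm_num)
    have hts : t ∈ Icc (0:ℝ) 1 := Ioo_subset_Icc_self ht
    have key : ∀ l < n + 1,
        iteratedDerivWithin l (fun s => dotv h (γ s)) (Icc 0 1) t = 0 := by
      intro l hl
      rw [iteratedDerivWithin_dot h γ hud hγ hts l]
      have := congrFun hmul ⟨l, hl⟩
      simpa [Matrix.vecMul, dotProduct, dotv, hM] using this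
    have := hconv h hne 1 (fun _ => t) (fun _ => n + 1)
      (fun _ => ht) (fun a b _ => Subsingleton.elim a b) (fun _ => Nat.le_add_left 1 n)
      (fun _ => key)
    simp at this
  refine ⟨?_, hdet⟩
  have := Matrix.linearIndependent_cols_iff_isUnit.mpr
    ((Matrix.isUnit_iff_isUnit_det M).mpr (isUnit_iff_ne_zero.mpr hdet))
  exact this
end
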